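/- arXiv:math/0701357 — 5 statements merged into one kernel-verified Lean document; each statement's English description precedes it below -/
import Mathlib

section
/- Let A = A₀ ⊕ A₁ be a prime superalgebra over a commutative unital ring φ with 1/2 ∈ φ. Then A is semiprime as an ungraded ring (it has no nonzero, not necessarily graded, two-sided ideal of square zero) and the even part A₀ is a semiprime ring. -/
open DirectSum

/-- The sign `(−1)^{ij}` for degrees `i j : ZMod 2`. -/
def ssign (i j : ZMod 2) : ℤ := if i = 1 ∧ j = 1 then -1 else 1

variable {φ A : Type*}

section
variable [CommRing φ] [Ring A] [Algebra φ A]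

/-- Superbracket `[x,y] = xy − (−1)^{ij} yx` of homogeneous elements of degrees `i`, `j`. -/
def sbr (i j : ZMod 2) (x y : A) : A := x * y - ssign i j • (y * x)

/-- Supercircle product `x∘y = xy + (−1)^{ij} yx` of homogeneous elements of degrees `i`, `j`. -/
def scirc (i j : ZMod 2) (x y : A) : A := x * y + ssign i j • (y * x)

/-- A graded two-sided ideal of the superalgebra `A = ⨁ 𝒜 i`. -/
structure SuperIdeal (𝒜 : ZMod 2 → Submodule φ A) [GradedAlgebra 𝒜] where
  carrier : Submodule φ A
  mul_mem_left : ∀ (a x : A), x ∈ carrier → a * x ∈ carrier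
  mul_mem_right : ∀ (a x : A), x ∈ carrier → x * a ∈ carrier
  graded' : ∀ (i : ZMod 2), ∀ x ∈ carrier, ((DirectSum.decompose 𝒜 x) i : A) ∈ carrier

variable (𝒜 : ZMod 2 → Submodule φ A)

/-- A superalgebra is prime if `I⬝J = 0` forces `I = 0` or `J = 0` for graded ideals `I`, `J`. -/
def SuperPrime [GradedAlgebra 𝒜] : Prop :=
  ∀ I J : SuperIdeal 𝒜, (∀ x ∈ I.carrier, ∀ y ∈ J.carrier, x * y = 0) →
    I.carrier = ⊥ ∨ J.carrier = ⊥

/-- A superalgebra is semiprime if it has no nonzero graded ideal of square zero. -/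
def SuperSemiprime [GradedAlgebra 𝒜] : Prop :=
  ∀ I : SuperIdeal 𝒜, (∀ x ∈ I.carrier, ∀ y ∈ I.carrier, x * y = 0) → I.carrier = ⊥

/-- `Z`, the even part of the center of `A`. -/
def evenCenter : Set A := {z : A | z ∈ 𝒜 0 ∧ ∀ x : A, z * x = x * z}

/-- A subset `M` of `A` is dense if the (non-unital) subalgebra of `A` generated by `M`
contains a nonzero ideal of `A`. -/
def IsDenseIn [GradedAlgebra 𝒜] (M : Set A) : Prop :=
  ∃ J : SuperIdeal 𝒜, J.carrier ≠ ⊥ ∧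
    (J.carrier : Set A) ⊆ NonUnitalAlgebra.adjoin φ M

/-- A superinvolution on the superalgebra `A`. -/
structure Superinvolution (𝒜 : ZMod 2 → Submodule φ A) where
  toFun : A →ₗ[φ] A
  grading : ∀ (i : ZMod 2), ∀ x ∈ 𝒜 i, toFun x ∈ 𝒜 i
  invol : ∀ x : A, toFun (toFun x) = x
  mul_rev : ∀ (i j : ZMod 2), ∀ x ∈ 𝒜 i, ∀ y ∈ 𝒜 j,
    toFun (x * y) = ssign i j • (toFun y * toFun x)

/-- A Lie ideal of the Lie superalgebra `K` of skew elements of `(A,*)`: a graded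
`φ`-submodule of `K` with `[U,K] ⊆ U`. -/
structure LieIdealOfSkew [GradedAlgebra 𝒜] (σ : Superinvolution 𝒜) where
  carrier : Submodule φ A
  skew : ∀ x ∈ carrier, σ.toFun x = -x
  graded' : ∀ (i : ZMod 2), ∀ x ∈ carrier, ((DirectSum.decompose 𝒜 x) i : A) ∈ carrier
  bracket_mem : ∀ (i j : ZMod 2) (u k : A), u ∈ carrier → u ∈ 𝒜 i →
    k ∈ 𝒜 j → σ.toFun k = -k → sbr i j u k ∈ carrier

/-- The additive span of superbrackets of homogeneous elements of `S` and `T`. -/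
def superBrAdd (S T : Set A) : AddSubgroup A :=
  AddSubgroup.closure
    {z : A | ∃ (i j : ZMod 2) (x y : A), x ∈ S ∧ x ∈ 𝒜 i ∧ y ∈ T ∧ y ∈ 𝒜 j ∧ z = sbr i j x y}

/-- The `φ`-submodule spanned by superbrackets of homogeneous elements of `S` and `T`. -/
def superBrSpan (S T : Set A) : Submodule φ A :=
  Submodule.span φ
    {z : A | ∃ (i j : ZMod 2) (x y : A), x ∈ S ∧ x ∈ 𝒜 i ∧ y ∈ T ∧ y ∈ 𝒜 j ∧ z = sbr i j x y}

end

/-- Data exhibiting the prime superalgebra `A` as a central order in a simple superalgebra `B`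
that is 4-dimensional over its center. -/
structure CentralOrderIn4DimSimple (φ : Type*) [CommRing φ] {A : Type*} [Ring A] [Algebra φ A]
    (𝒜 : ZMod 2 → Submodule φ A) [GradedAlgebra 𝒜] where
  B : Type
  [ringB : Ring B]
  [algB : Algebra φ B]
  ℬ : ZMod 2 → Submodule φ B
  [gradedB : GradedAlgebra ℬ]
  ι : A →ₐ[φ] B
  inj : Function.Injective ι
  grading : ∀ (i : ZMod 2), ∀ x ∈ 𝒜 i, ι x ∈ ℬ i
  central_unit : ∀ z ∈ evenCenter 𝒜, z ≠ 0 → IsUnit (ι z)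
  localized : ∀ b : B, ∃ z a : A, z ∈ evenCenter 𝒜 ∧ z ≠ 0 ∧ ι z * b = ι a
  sq_ne_zero : ∃ x y : B, x * y ≠ 0
  simple : ∀ J : SuperIdeal ℬ, J.carrier = ⊥ ∨ J.carrier = ⊤
  dim4 : Module.finrank (Subring.center B) B = 4

/-- `I` is a two-sided ideal of the (sub)ring `B` of `A`. -/
def IsTwoSidedIdealIn {A : Type*} [Ring A] (B I : Set A) : Prop :=
  I ⊆ B ∧ (0 : A) ∈ I ∧ (∀ x ∈ I, ∀ y ∈ I, x + y ∈ I) ∧ (∀ x ∈ I, -x ∈ I) ∧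
    ∀ b ∈ B, ∀ x ∈ I, b * x ∈ I ∧ x * b ∈ I


section SemiprimeHelpers
variable {φ A : Type*} [CommRing φ] [Ring A] [Algebra φ A]
variable (𝒜 : ZMod 2 → Submodule φ A) [GradedAlgebra 𝒜]

noncomputable def dd (i : ZMod 2) (x : A) : A := (DirectSum.decompose 𝒜 x i : A)

lemma dd_mem (i : ZMod 2) (x : A) : dd 𝒜 i x ∈ 𝒜 i := (DirectSum.decompose 𝒜 x i).2

lemma dd_add (i : ZMod 2) (x y : A) : dd 𝒜 i (x + y) = dd 𝒜 i x + dd 𝒜 i y := by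
  simp only [dd, DirectSum.decompose_add, DirectSum.add_apply, Submodule.coe_add]

lemma dd_smul (i : ZMod 2) (r : φ) (x : A) : dd 𝒜 i (r • x) = r • dd 𝒜 i x := by
  simp only [dd, DirectSum.decompose_smul]
  rfl

lemma dd_zero (i : ZMod 2) : dd 𝒜 i (0 : A) = 0 := by
  simp [dd]

lemma dd_same {i : ZMod 2} {x : A} (h : x ∈ 𝒜 i) : dd 𝒜 i x = x :=
  DirectSum.decompose_of_mem_same 𝒜 h

lemma dd_ne {i j : ZMod 2} {x : A} (h : x ∈ 𝒜 i) (hij : i ≠ j) : dd 𝒜 j x = 0 :=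
  DirectSum.decompose_of_mem_ne 𝒜 h hij

lemma two_comp (x : A) : x = dd 𝒜 0 x + dd 𝒜 1 x := by
  classical
  have h := DirectSum.sum_support_decompose 𝒜 x
  conv_lhs => rw [← h]
  rw [Finset.sum_subset (Finset.subset_univ _)]
  · have huniv : (Finset.univ : Finset (ZMod 2)) = {0, 1} := by decide
    rw [huniv, Finset.sum_insert (by decide), Finset.sum_singleton]
    rfl
  · intro i _ hi
    have := DFinsupp.notMem_support_iff.mp hi
    simp [this]

lemma dd_pair {u v : A} (hu : u ∈ 𝒜 0) (hv : v ∈ 𝒜 1) :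
    dd 𝒜 0 (u + v) = u ∧ dd 𝒜 1 (u + v) = v := by
  constructor
  · rw [dd_add, dd_same 𝒜 hu, dd_ne 𝒜 hv (by decide), add_zero]
  · rw [dd_add, dd_ne 𝒜 hu (by decide), dd_same 𝒜 hv, zero_add]

/-- The grading automorphism. -/
noncomputable def sg (x : A) : A := dd 𝒜 0 x - dd 𝒜 1 x

lemma sg_add (x y : A) : sg 𝒜 (x + y) = sg 𝒜 x + sg 𝒜 y := by
  simp only [sg, dd_add]; abel

lemma sg_smul (r : φ) (x : A) : sg 𝒜 (r • x) = r • sg 𝒜 x := by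
  simp only [sg, dd_smul, smul_sub]

lemma sg_zero : sg 𝒜 (0 : A) = 0 := by simp [sg, dd_zero]

lemma sg_even {x : A} (h : x ∈ 𝒜 0) : sg 𝒜 x = x := by
  rw [sg, dd_same 𝒜 h, dd_ne 𝒜 h (by decide), sub_zero]

lemma sg_odd {x : A} (h : x ∈ 𝒜 1) : sg 𝒜 x = -x := by
  rw [sg, dd_same 𝒜 h, dd_ne 𝒜 h (by decide), zero_sub]

lemma sg_pair {u v : A} (hu : u ∈ 𝒜 0) (hv : v ∈ 𝒜 1) : sg 𝒜 (u + v) = u - v := by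
  rw [sg, (dd_pair 𝒜 hu hv).1, (dd_pair 𝒜 hu hv).2]

lemma sg_sg (x : A) : sg 𝒜 (sg 𝒜 x) = x := by
  have h0 := dd_mem 𝒜 0 x
  have h1 := dd_mem 𝒜 1 x
  have hx := two_comp 𝒜 x
  rw [show sg 𝒜 x = dd 𝒜 0 x + -dd 𝒜 1 x from by rw [sg]; abel,
    sg_pair 𝒜 h0 (neg_mem h1), sub_neg_eq_add, ← hx]

lemma sg_mul (x y : A) : sg 𝒜 (x * y) = sg 𝒜 x * sg 𝒜 y := by
  have h0x := dd_mem 𝒜 0 x; have h1x := dd_mem 𝒜 1 x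
  have h0y := dd_mem 𝒜 0 y; have h1y := dd_mem 𝒜 1 y
  have hE : dd 𝒜 0 x * dd 𝒜 0 y + dd 𝒜 1 x * dd 𝒜 1 y ∈ 𝒜 0 := by
    refine add_mem ?_ ?_
    · have := SetLike.mul_mem_graded h0x h0y; simpa using this
    · have := SetLike.mul_mem_graded h1x h1y
      rwa [show ((1 : ZMod 2) + 1) = 0 from by decide] at this
  have hO : dd 𝒜 0 x * dd 𝒜 1 y + dd 𝒜 1 x * dd 𝒜 0 y ∈ 𝒜 1 := by
    refine add_mem ?_ ?_
    · have := SetLike.mul_mem_graded h0x h1y; simpa using this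
    · have := SetLike.mul_mem_graded h1x h0y; simpa using this
  have hxy : x * y = (dd 𝒜 0 x * dd 𝒜 0 y + dd 𝒜 1 x * dd 𝒜 1 y)
      + (dd 𝒜 0 x * dd 𝒜 1 y + dd 𝒜 1 x * dd 𝒜 0 y) := by
    conv_lhs => rw [two_comp 𝒜 x, two_comp 𝒜 y]
    noncomm_ring
  rw [hxy, sg_pair 𝒜 hE hO, sg, sg]
  noncomm_ring

lemma dd_half [Invertible (2 : φ)] (x : A) :
    dd 𝒜 0 x = (⅟2 : φ) • (x + sg 𝒜 x) ∧ dd 𝒜 1 x = (⅟2 : φ) • (x - sg 𝒜 x) := by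
  constructor
  · have : x + sg 𝒜 x = (2 : φ) • dd 𝒜 0 x := by
      rw [sg]; nth_rewrite 1 [two_comp 𝒜 x]
      rw [two_smul]; abel
    rw [this, invOf_smul_smul]
  · have : x - sg 𝒜 x = (2 : φ) • dd 𝒜 1 x := by
      rw [sg]; nth_rewrite 1 [two_comp 𝒜 x]
      rw [two_smul]; abel
    rw [this, invOf_smul_smul]

lemma zmod2_cases : ∀ i : ZMod 2, i = 0 ∨ i = 1 := by decide

lemma graded_of_sg_stable [Invertible (2 : φ)] (M : Submodule φ A)
    (h : ∀ x ∈ M, sg 𝒜 x ∈ M) (i : ZMod 2) :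
    ∀ x ∈ M, ((DirectSum.decompose 𝒜 x) i : A) ∈ M := by
  intro x hx
  have h0 : dd 𝒜 0 x ∈ M := by
    rw [(dd_half 𝒜 x).1]; exact M.smul_mem _ (M.add_mem hx (h x hx))
  have h1 : dd 𝒜 1 x ∈ M := by
    rw [(dd_half 𝒜 x).2]; exact M.smul_mem _ (M.sub_mem hx (h x hx))
  rcases zmod2_cases i with rfl | rfl
  · exact h0
  · exact h1

lemma span_mul_left (T : Set A) (h : ∀ a : A, ∀ t ∈ T, a * t ∈ T) (a : A) :
    ∀ x ∈ Submodule.span φ T, a * x ∈ Submodule.span φ T := by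
  intro x hx
  induction hx using Submodule.span_induction with
  | mem z hz => exact Submodule.subset_span (h a z hz)
  | zero => simpa using Submodule.zero_mem _
  | add u v _ _ ihu ihv => rw [mul_add]; exact Submodule.add_mem _ ihu ihv
  | smul r u _ ihu => rw [mul_smul_comm]; exact Submodule.smul_mem _ r ihu

lemma span_mul_right (T : Set A) (h : ∀ a : A, ∀ t ∈ T, t * a ∈ T) (a : A) :
    ∀ x ∈ Submodule.span φ T, x * a ∈ Submodule.span φ T := by
  intro x hx
  induction hx using Submodule.span_induction with
  | mem z hz => exact Submodule.subset_span (h a z hz)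
  | zero => simpa using Submodule.zero_mem _
  | add u v _ _ ihu ihv => rw [add_mul]; exact Submodule.add_mem _ ihu ihv
  | smul r u _ ihu => rw [smul_mul_assoc]; exact Submodule.smul_mem _ r ihu

lemma span_mul_span_zero (S T : Set A) (h : ∀ s ∈ S, ∀ t ∈ T, s * t = 0) :
    ∀ x ∈ Submodule.span φ S, ∀ y ∈ Submodule.span φ T, x * y = 0 := by
  intro x hx
  induction hx using Submodule.span_induction with
  | mem z hz =>
    intro y hy
    induction hy using Submodule.span_induction with
    | mem w hw => exact h z hz w hw
    | zero => rw [mul_zero]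
    | add u v _ _ ihu ihv => rw [mul_add, ihu, ihv, add_zero]
    | smul r u _ ihu => rw [mul_smul_comm, ihu, smul_zero]
  | zero => intro y hy; rw [zero_mul]
  | add u v _ _ ihu ihv => intro y hy; rw [add_mul, ihu y hy, ihv y hy, add_zero]
  | smul r u _ ihu => intro y hy; rw [smul_mul_assoc, ihu y hy, smul_zero]

lemma span_stable (T : Set A) (f : A → A) (hadd : ∀ x y, f (x + y) = f x + f y)
    (hsmul : ∀ (r : φ) x, f (r • x) = r • f x) (hzero : f 0 = 0)
    (h : ∀ t ∈ T, f t ∈ Submodule.span φ T) :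
    ∀ x ∈ Submodule.span φ T, f x ∈ Submodule.span φ T := by
  intro x hx
  induction hx using Submodule.span_induction with
  | mem z hz => exact h z hz
  | zero => rw [hzero]; exact Submodule.zero_mem _
  | add u v _ _ ihu ihv => rw [hadd]; exact Submodule.add_mem _ ihu ihv
  | smul r u _ ihu => rw [hsmul]; exact Submodule.smul_mem _ r ihu

end SemiprimeHelpers

/-- If `A = A₀ ⊕ A₁` is a prime superalgebra over a commutative ring `φ` with `½ ∈ φ`, then
`A` is semiprime as an ungraded ring and `A₀` is a semiprime ring (no nonzero two-sided
ideal of square zero). -/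
theorem prime_super_semiprime_ungraded_and_even
    {φ A : Type*} [CommRing φ] [Invertible (2 : φ)] [Ring A] [Algebra φ A]
    (𝒜 : ZMod 2 → Submodule φ A) [GradedAlgebra 𝒜]
    (hprime : SuperPrime 𝒜) :
    (∀ I : Set A, IsTwoSidedIdealIn Set.univ I →
      (∀ x ∈ I, ∀ y ∈ I, x * y = 0) → I ⊆ {0}) ∧
    (∀ I : Set A, IsTwoSidedIdealIn (𝒜 0 : Set A) I →
      (∀ x ∈ I, ∀ y ∈ I, x * y = 0) → I ⊆ {0}) := by
  constructor
  · -- ungraded semiprimeness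
      intro I hI sq
      obtain ⟨-, hzero, hadd, -, hmul⟩ := hI
      have hml : ∀ b x : A, x ∈ I → b * x ∈ I := fun b x hx => (hmul b trivial x hx).1
      have hmr : ∀ b x : A, x ∈ I → x * b ∈ I := fun b x hx => (hmul b trivial x hx).2
      have hsm : ∀ (r : φ) (x : A), x ∈ I → r • x ∈ I := fun r x hx => by
        rw [Algebra.smul_def]; exact hml _ _ hx
      -- J' = I ∩ σ(I)
      let J' : Submodule φ A :=
        { carrier := {x | x ∈ I ∧ sg 𝒜 x ∈ I}
          add_mem' := fun ha hb => ⟨hadd _ ha.1 _ hb.1, by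
            rw [sg_add]; exact hadd _ ha.2 _ hb.2⟩
          zero_mem' := ⟨hzero, by rw [sg_zero]; exact hzero⟩
          smul_mem' := fun r x hx => ⟨hsm r x hx.1, by rw [sg_smul]; exact hsm r _ hx.2⟩ }
      have hJ'mem : ∀ x : A, x ∈ J' ↔ x ∈ I ∧ sg 𝒜 x ∈ I := fun _ => Iff.rfl
      let J'SI : SuperIdeal 𝒜 :=
        { carrier := J'
          mul_mem_left := fun a x hx => ⟨hml a x hx.1, by
            rw [sg_mul]; exact hml _ _ hx.2⟩
          mul_mem_right := fun a x hx => ⟨hmr a x hx.1, by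
            rw [sg_mul]; exact hmr _ _ hx.2⟩
          graded' := fun i x hx =>
            graded_of_sg_stable 𝒜 J' (fun y hy => ⟨hy.2, by rw [sg_sg]; exact hy.1⟩) i x hx }
      have hJbot : J' = ⊥ :=
        (hprime J'SI J'SI (fun x hx y hy => sq x hx.1 y hy.1)).elim id id
      have hIsI : ∀ u v : A, u ∈ I → v ∈ I → u * sg 𝒜 v = 0 := by
        intro u v hu hv
        have : u * sg 𝒜 v ∈ J' := ⟨hmr _ _ hu, by
          rw [sg_mul, sg_sg]; exact hml _ _ hv⟩
        rw [hJbot] at this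
        simpa using this
      have hsII : ∀ u v : A, u ∈ I → v ∈ I → sg 𝒜 v * u = 0 := by
        intro u v hu hv
        have : sg 𝒜 v * u ∈ J' := ⟨hml _ _ hu, by
          rw [sg_mul, sg_sg]; exact hmr _ _ hv⟩
        rw [hJbot] at this
        simpa using this
      -- K = I + σ(I)
      let K : Submodule φ A :=
        { carrier := {z | ∃ u v : A, u ∈ I ∧ v ∈ I ∧ z = u + sg 𝒜 v}
          zero_mem' := ⟨0, 0, hzero, hzero, by rw [sg_zero, add_zero]⟩
          add_mem' := by
            rintro a b ⟨u, v, hu, hv, rfl⟩ ⟨u', v', hu', hv', rfl⟩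
            exact ⟨u + u', v + v', hadd _ hu _ hu', hadd _ hv _ hv', by rw [sg_add]; abel⟩
          smul_mem' := by
            rintro r x ⟨u, v, hu, hv, rfl⟩
            exact ⟨r • u, r • v, hsm r u hu, hsm r v hv, by rw [sg_smul, smul_add]⟩ }
      let KSI : SuperIdeal 𝒜 :=
        { carrier := K
          mul_mem_left := by
            rintro a x ⟨u, v, hu, hv, rfl⟩
            refine ⟨a * u, sg 𝒜 a * v, hml a u hu, hml _ v hv, ?_⟩
            rw [mul_add, sg_mul, sg_sg]
          mul_mem_right := by
            rintro a x ⟨u, v, hu, hv, rfl⟩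
            refine ⟨u * a, v * sg 𝒜 a, hmr a u hu, hmr _ v hv, ?_⟩
            rw [add_mul, sg_mul, sg_sg]
          graded' := fun i x hx =>
            graded_of_sg_stable 𝒜 K (by
              rintro y ⟨u, v, hu, hv, rfl⟩
              exact ⟨v, u, hv, hu, by rw [sg_add, sg_sg]; abel⟩) i x hx }
      have hKsq : ∀ x ∈ K, ∀ y ∈ K, x * y = 0 := by
        rintro x ⟨u, v, hu, hv, rfl⟩ y ⟨u', v', hu', hv', rfl⟩
        rw [add_mul, mul_add, mul_add, sq u hu u' hu', hIsI u v' hu hv', hsII u' v hu' hv,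
          ← sg_mul, sq v hv v' hv', sg_zero]
        simp
      have hKbot : K = ⊥ := (hprime KSI KSI hKsq).elim id id
      intro x hx
      have : x ∈ K := ⟨x, 0, hx, hzero, by rw [sg_zero, add_zero]⟩
      rw [hKbot] at this
      simpa using this
  · -- even part semiprime
      intro I hI sq
      obtain ⟨hsub, hzero, hadd, -, hmul⟩ := hI
      have hml : ∀ b : A, b ∈ 𝒜 0 → ∀ x ∈ I, b * x ∈ I := fun b hb x hx => (hmul b hb x hx).1
      have hmr : ∀ b : A, b ∈ 𝒜 0 → ∀ x ∈ I, x * b ∈ I := fun b hb x hx => (hmul b hb x hx).2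
      have hIeven : ∀ x ∈ I, x ∈ 𝒜 0 := fun x hx => hsub hx
      -- Stage 1 : the graded ideal generated by I * 𝒜₁ * I has square zero.
      set T : Set A := {z | ∃ b c aa x y : A, aa ∈ 𝒜 1 ∧ x ∈ I ∧ y ∈ I ∧
        z = b * (x * aa * y) * c} with hT
      have hTl : ∀ a : A, ∀ t ∈ T, a * t ∈ T := by
        rintro a t ⟨b, c, aa, x, y, haa, hx, hy, rfl⟩
        exact ⟨a * b, c, aa, x, y, haa, hx, hy, by rw [← mul_assoc, ← mul_assoc]⟩
      have hTr : ∀ a : A, ∀ t ∈ T, t * a ∈ T := by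
        rintro a t ⟨b, c, aa, x, y, haa, hx, hy, rfl⟩
        exact ⟨b, c * a, aa, x, y, haa, hx, hy, by rw [mul_assoc]⟩
      have hTsg : ∀ t ∈ T, sg 𝒜 t ∈ Submodule.span φ T := by
        rintro t ⟨b, c, aa, x, y, haa, hx, hy, rfl⟩
        have : sg 𝒜 (b * (x * aa * y) * c)
            = -(sg 𝒜 b * (x * aa * y) * sg 𝒜 c) := by
          rw [sg_mul, sg_mul, sg_mul, sg_mul, sg_even 𝒜 (hIeven x hx),
            sg_even 𝒜 (hIeven y hy), sg_odd 𝒜 haa]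
          noncomm_ring
        rw [this]
        exact neg_mem (Submodule.subset_span ⟨sg 𝒜 b, sg 𝒜 c, aa, x, y, haa, hx, hy, rfl⟩)
      -- generator products vanish
      have hTzero : ∀ s ∈ T, ∀ t ∈ T, s * t = 0 := by
        rintro s ⟨b, c, aa, x, y, haa, hx, hy, rfl⟩ t ⟨b', c', aa', x', y', haa', hx', hy', rfl⟩
        set m : A := c * b' with hm
        have hA : ∀ z : A, y * (dd 𝒜 0 m * (x' * z)) = 0 := by
          intro z
          have h0 : y * dd 𝒜 0 m * x' = 0 := sq _ (hmr _ (dd_mem 𝒜 0 m) y hy) _ hx'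
          calc y * (dd 𝒜 0 m * (x' * z)) = (y * dd 𝒜 0 m * x') * z := by
                rw [mul_assoc, mul_assoc]
            _ = 0 := by rw [h0, zero_mul]
        have hB : ∀ z : A, x * (aa * (y * (dd 𝒜 1 m * (x' * z)))) = 0 := by
          intro z
          have he : aa * (y * dd 𝒜 1 m) ∈ 𝒜 0 := by
            have h1 : y * dd 𝒜 1 m ∈ 𝒜 (0 + 1) :=
              SetLike.mul_mem_graded (hIeven y hy) (dd_mem 𝒜 1 m)
            have h2 : aa * (y * dd 𝒜 1 m) ∈ 𝒜 (1 + (0 + 1)) := SetLike.mul_mem_graded haa h1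
            rwa [show ((1 : ZMod 2) + (0 + 1)) = 0 from by decide] at h2
          have h0 : (x * (aa * (y * dd 𝒜 1 m))) * x' = 0 := sq _ (hmr _ he x hx) _ hx'
          calc x * (aa * (y * (dd 𝒜 1 m * (x' * z))))
              = ((x * (aa * (y * dd 𝒜 1 m))) * x') * z := by
                simp only [mul_assoc]
            _ = 0 := by rw [h0, zero_mul]
        have expand : b * (x * aa * y) * c * (b' * (x' * aa' * y') * c')
            = b * (x * (aa * (y * (m * (x' * (aa' * (y' * c'))))))) := by
          rw [hm]; simp only [mul_assoc]
        rw [expand, two_comp 𝒜 m, add_mul]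
        simp only [mul_add]
        rw [hA (aa' * (y' * c')), hB (aa' * (y' * c'))]
        simp
      let K : Submodule φ A := Submodule.span φ T
      let KSI : SuperIdeal 𝒜 :=
        { carrier := K
          mul_mem_left := fun a x hx => span_mul_left T hTl a x hx
          mul_mem_right := fun a x hx => span_mul_right T hTr a x hx
          graded' := fun i x hx =>
            graded_of_sg_stable 𝒜 K
              (span_stable T (sg 𝒜) (sg_add 𝒜) (sg_smul 𝒜) (sg_zero 𝒜) hTsg) i x hx }
      have hKbot : K = ⊥ :=
        (hprime KSI KSI (span_mul_span_zero T T hTzero)).elim id id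
      have hodd : ∀ x ∈ I, ∀ aa ∈ 𝒜 1, ∀ y ∈ I, x * aa * y = 0 := by
        intro x hx aa haa y hy
        have : x * aa * y ∈ K := Submodule.subset_span
          ⟨1, 1, aa, x, y, haa, hx, hy, by rw [one_mul, mul_one]⟩
        rw [hKbot] at this
        simpa using this
      -- Stage 2
      have hmid : ∀ x ∈ I, ∀ (m : A), ∀ y ∈ I, ∀ z : A, x * (m * (y * z)) = 0 := by
        intro x hx m y hy z
        have h0 : x * (dd 𝒜 0 m * (y * z)) = 0 := by
          have : x * dd 𝒜 0 m * y = 0 := sq _ (hmr _ (dd_mem 𝒜 0 m) x hx) _ hy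
          calc x * (dd 𝒜 0 m * (y * z)) = (x * dd 𝒜 0 m * y) * z := by
                rw [mul_assoc, mul_assoc]
            _ = 0 := by rw [this, zero_mul]
        have h1 : x * (dd 𝒜 1 m * (y * z)) = 0 := by
          have : x * dd 𝒜 1 m * y = 0 := hodd x hx _ (dd_mem 𝒜 1 m) y hy
          calc x * (dd 𝒜 1 m * (y * z)) = (x * dd 𝒜 1 m * y) * z := by
                rw [mul_assoc, mul_assoc]
            _ = 0 := by rw [this, zero_mul]
        rw [two_comp 𝒜 m, add_mul, mul_add, h0, h1, add_zero]
      set T2 : Set A := {z | ∃ b c x : A, x ∈ I ∧ z = b * x * c} with hT2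
      have hT2l : ∀ a : A, ∀ t ∈ T2, a * t ∈ T2 := by
        rintro a t ⟨b, c, x, hx, rfl⟩
        exact ⟨a * b, c, x, hx, by rw [← mul_assoc, ← mul_assoc]⟩
      have hT2r : ∀ a : A, ∀ t ∈ T2, t * a ∈ T2 := by
        rintro a t ⟨b, c, x, hx, rfl⟩
        exact ⟨b, c * a, x, hx, by rw [mul_assoc]⟩
      have hT2sg : ∀ t ∈ T2, sg 𝒜 t ∈ Submodule.span φ T2 := by
        rintro t ⟨b, c, x, hx, rfl⟩
        rw [sg_mul, sg_mul, sg_even 𝒜 (hIeven x hx)]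
        exact Submodule.subset_span ⟨sg 𝒜 b, sg 𝒜 c, x, hx, rfl⟩
      have hT2zero : ∀ s ∈ T2, ∀ t ∈ T2, s * t = 0 := by
        rintro s ⟨b, c, x, hx, rfl⟩ t ⟨b', c', x', hx', rfl⟩
        have expand : b * x * c * (b' * x' * c') = b * (x * ((c * b') * (x' * c'))) := by
          simp only [mul_assoc]
        rw [expand, hmid x hx (c * b') x' hx' c', mul_zero]
      let N : Submodule φ A := Submodule.span φ T2
      let NSI : SuperIdeal 𝒜 :=
        { carrier := N
          mul_mem_left := fun a x hx => span_mul_left T2 hT2l a x hx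
          mul_mem_right := fun a x hx => span_mul_right T2 hT2r a x hx
          graded' := fun i x hx =>
            graded_of_sg_stable 𝒜 N
              (span_stable T2 (sg 𝒜) (sg_add 𝒜) (sg_smul 𝒜) (sg_zero 𝒜) hT2sg) i x hx }
      have hNbot : N = ⊥ :=
        (hprime NSI NSI (span_mul_span_zero T2 T2 hT2zero)).elim id id
      intro x hx
      have : x ∈ N := Submodule.subset_span ⟨1, 1, x, hx, by rw [one_mul, mul_one]⟩
      rw [hNbot] at this
      simpa using this
end

section
/- Let A = A₀ ⊕ A₁ be a prime superalgebra over a commutative unital ring φ with 1/2 ∈ φ. Then either A is prime as an ungraded ring, or the even part A₀ is a prime ring. -/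
open DirectSum

variable {φ A : Type*}

section Aux

variable {φ A : Type*} [CommRing φ] [Ring A] [Algebra φ A]
variable (𝒜 : ZMod 2 → Submodule φ A) [GradedAlgebra 𝒜]

private lemma zmod2_cases_s2 (t : ZMod 2) : t = 0 ∨ t = 1 := by revert t; decide

private lemma aux_sum_decompose (x : A) :
    x = (DirectSum.decompose 𝒜 x 0 : A) + (DirectSum.decompose 𝒜 x 1 : A) := by
  classical
  conv_lhs => rw [← DirectSum.sum_support_decompose 𝒜 x]
  rw [Finset.sum_subset (Finset.subset_univ _) ?_]
  · have huniv : (Finset.univ : Finset (ZMod 2)) = {0, 1} := by decide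
    rw [huniv, Finset.sum_insert (by decide), Finset.sum_singleton]
  · intro i _ hi
    rw [DFinsupp.notMem_support_iff.mp hi]
    simp

private lemma aux_even_odd_zero {k : ZMod 2} {u v : A} (hu : u ∈ 𝒜 k) (hv : v ∈ 𝒜 (k + 1))
    (h : u + v = 0) : u = 0 ∧ v = 0 := by
  have hne' : ∀ t : ZMod 2, t + 1 ≠ t := by decide
  have hne : k + 1 ≠ k := hne' k
  have h1 : ((DirectSum.decompose 𝒜 (u + v)) k : A) = u := by
    rw [DirectSum.decompose_add]
    simp [DirectSum.decompose_of_mem_same 𝒜 hu, DirectSum.decompose_of_mem_ne 𝒜 hv hne]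
  rw [h] at h1
  simp only [DirectSum.decompose_zero] at h1
  have hu0 : u = 0 := by simpa using h1.symm
  exact ⟨hu0, by rw [hu0, zero_add] at h; exact h⟩

/-- The set of products `x * a * y` with `x`, `y` homogeneous. -/
private def genSet (a : A) : Set A :=
  {z : A | ∃ (j k : ZMod 2) (x y : A), x ∈ 𝒜 j ∧ y ∈ 𝒜 k ∧ z = x * a * y}

/-- The graded ideal generated by a homogeneous element `a`. -/
private def genSI {i : ZMod 2} (a : A) (_ha : a ∈ 𝒜 i) : SuperIdeal 𝒜 where
  carrier := Submodule.span φ (genSet 𝒜 a)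
  mul_mem_left := by
    intro p z hz
    induction hz using Submodule.span_induction with
    | mem z hzgen =>
      obtain ⟨j, k, x, y, hx, hy, rfl⟩ := hzgen
      have hp : p * (x * a * y) =
          ((DirectSum.decompose 𝒜 p 0 : A) * x) * a * y +
          ((DirectSum.decompose 𝒜 p 1 : A) * x) * a * y := by
        conv_lhs => rw [aux_sum_decompose 𝒜 p]
        noncomm_ring
      rw [hp]
      exact add_mem
        (Submodule.subset_span ⟨0 + j, k, _, y,
          SetLike.mul_mem_graded (SetLike.coe_mem _) hx, hy, rfl⟩)
        (Submodule.subset_span ⟨1 + j, k, _, y,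
          SetLike.mul_mem_graded (SetLike.coe_mem _) hx, hy, rfl⟩)
    | zero => rw [mul_zero]; exact zero_mem _
    | add z w _ _ hz hw => rw [mul_add]; exact add_mem hz hw
    | smul r z _ hz => rw [mul_smul_comm]; exact Submodule.smul_mem _ _ hz
  mul_mem_right := by
    intro p z hz
    induction hz using Submodule.span_induction with
    | mem z hzgen =>
      obtain ⟨j, k, x, y, hx, hy, rfl⟩ := hzgen
      have hp : (x * a * y) * p =
          x * a * (y * (DirectSum.decompose 𝒜 p 0 : A)) +
          x * a * (y * (DirectSum.decompose 𝒜 p 1 : A)) := by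
        conv_lhs => rw [aux_sum_decompose 𝒜 p]
        noncomm_ring
      rw [hp]
      exact add_mem
        (Submodule.subset_span ⟨j, k + 0, x, _, hx,
          SetLike.mul_mem_graded hy (SetLike.coe_mem _), rfl⟩)
        (Submodule.subset_span ⟨j, k + 1, x, _, hx,
          SetLike.mul_mem_graded hy (SetLike.coe_mem _), rfl⟩)
    | zero => rw [zero_mul]; exact zero_mem _
    | add z w _ _ hz hw => rw [add_mul]; exact add_mem hz hw
    | smul r z _ hz => rw [smul_mul_assoc]; exact Submodule.smul_mem _ _ hz
  graded' := by
    intro l z hz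
    induction hz using Submodule.span_induction with
    | mem z hzgen =>
      obtain ⟨j, k, x, y, hx, hy, rfl⟩ := hzgen
      have hmem : x * a * y ∈ 𝒜 (j + i + k) :=
        SetLike.mul_mem_graded (SetLike.mul_mem_graded hx _ha) hy
      by_cases hl : l = j + i + k
      · subst hl
        rw [DirectSum.decompose_of_mem_same 𝒜 hmem]
        exact Submodule.subset_span ⟨j, k, x, y, hx, hy, rfl⟩
      · rw [DirectSum.decompose_of_mem_ne 𝒜 hmem (Ne.symm hl)]
        exact zero_mem _
    | zero =>
      simp only [DirectSum.decompose_zero, DirectSum.zero_apply, ZeroMemClass.coe_zero]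
      exact zero_mem _
    | add z w _ _ hz hw =>
      rw [DirectSum.decompose_add, DirectSum.add_apply, Submodule.coe_add]
      exact add_mem hz hw
    | smul r z _ hz =>
      rw [DirectSum.decompose_smul, DFinsupp.smul_apply, SetLike.val_smul]
      exact Submodule.smul_mem _ r hz

private lemma aux_hom_prime (hprime : SuperPrime 𝒜) {i j : ZMod 2} {c d : A}
    (hc : c ∈ 𝒜 i) (hd : d ∈ 𝒜 j) (h : ∀ x : A, c * x * d = 0) : c = 0 ∨ d = 0 := by
  have hIJ : ∀ u ∈ (genSI 𝒜 c hc).carrier, ∀ v ∈ (genSI 𝒜 d hd).carrier, u * v = 0 := by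
    intro u hu v hv
    induction hu using Submodule.span_induction with
    | mem u hugen =>
      induction hv using Submodule.span_induction with
      | mem v hvgen =>
        obtain ⟨j₁, k₁, x, y, hx, hy, rfl⟩ := hugen
        obtain ⟨j₂, k₂, x', y', hx', hy', rfl⟩ := hvgen
        have key : (x * c * y) * (x' * d * y') = x * ((c * (y * x') * d) * y') := by
          simp only [mul_assoc]
        rw [key, h (y * x'), zero_mul, mul_zero]
      | zero => rw [mul_zero]
      | add v w _ _ hv hw => rw [mul_add, hv, hw, add_zero]
      | smul r v _ hv => rw [mul_smul_comm, hv, smul_zero]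
    | zero => rw [zero_mul]
    | add u w _ _ hu hw => rw [add_mul, hu, hw, add_zero]
    | smul r u _ hu => rw [smul_mul_assoc, hu, smul_zero]
  have hmemc : c ∈ (genSI 𝒜 c hc).carrier :=
    Submodule.subset_span ⟨0, 0, 1, 1, SetLike.one_mem_graded _, SetLike.one_mem_graded _,
      by rw [one_mul, mul_one]⟩
  have hmemd : d ∈ (genSI 𝒜 d hd).carrier :=
    Submodule.subset_span ⟨0, 0, 1, 1, SetLike.one_mem_graded _, SetLike.one_mem_graded _,
      by rw [one_mul, mul_one]⟩
  rcases hprime _ _ hIJ with hI | hJ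
  · left; have := hI ▸ hmemc; simpa using this
  · right; have := hJ ▸ hmemd; simpa using this

end Aux

/-- If `A = A₀ ⊕ A₁` is a prime superalgebra over a commutative ring `φ` with `½ ∈ φ`, then
either `A` is a prime ring or the even part `A₀` is a prime ring. -/
theorem prime_super_prime_ungraded_or_even
    {φ A : Type*} [CommRing φ] [Invertible (2 : φ)] [Ring A] [Algebra φ A]
    (𝒜 : ZMod 2 → Submodule φ A) [GradedAlgebra 𝒜]
    (hprime : SuperPrime 𝒜) :
    (∀ a b : A, (∀ x : A, a * x * b = 0) → a = 0 ∨ b = 0) ∨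
    (∀ a b : A, a ∈ 𝒜 0 → b ∈ 𝒜 0 →
      (∀ x ∈ 𝒜 0, a * x * b = 0) → a = 0 ∨ b = 0) := by
  by_contra hcon
  push_neg at hcon
  obtain ⟨hA, hA0⟩ := hcon
  obtain ⟨a, b, hab, ha, hb⟩ := hA
  obtain ⟨e, f, he0, hf0, hef, he, hf⟩ := hA0
  -- components of a and b
  obtain ⟨a0, a1, ha0, ha1, haeq⟩ : ∃ a0 a1 : A, a0 ∈ 𝒜 0 ∧ a1 ∈ 𝒜 1 ∧ a = a0 + a1 :=
    ⟨_, _, SetLike.coe_mem _, SetLike.coe_mem _, aux_sum_decompose 𝒜 a⟩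
  obtain ⟨b0, b1, hb0, hb1, hbeq⟩ : ∃ b0 b1 : A, b0 ∈ 𝒜 0 ∧ b1 ∈ 𝒜 1 ∧ b = b0 + b1 :=
    ⟨_, _, SetLike.coe_mem _, SetLike.coe_mem _, aux_sum_decompose 𝒜 b⟩
  -- the two component relations, for homogeneous middle terms
  have hR : ∀ (k : ZMod 2) (m : A), m ∈ 𝒜 k →
      a0 * m * b0 + a1 * m * b1 = 0 ∧ a0 * m * b1 + a1 * m * b0 = 0 := by
    intro k m hm
    have h0 := hab m
    rw [haeq, hbeq] at h0
    have hsplit : (a0 + a1) * m * (b0 + b1) =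
        (a0 * m * b0 + a1 * m * b1) + (a0 * m * b1 + a1 * m * b0) := by noncomm_ring
    rw [hsplit] at h0
    have e1 : (0 : ZMod 2) + k + 0 = k := by ring
    have e2 : (1 : ZMod 2) + k + 1 = k := by
      have : ∀ t : ZMod 2, 1 + t + 1 = t := by decide
      exact this k
    have e3 : (0 : ZMod 2) + k + 1 = k + 1 := by ring
    have e4 : (1 : ZMod 2) + k + 0 = k + 1 := by
      have : ∀ t : ZMod 2, 1 + t + 0 = t + 1 := by decide
      exact this k
    have hu : a0 * m * b0 + a1 * m * b1 ∈ 𝒜 k := by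
      have h1 := SetLike.mul_mem_graded (SetLike.mul_mem_graded ha0 hm) hb0
      have h2 := SetLike.mul_mem_graded (SetLike.mul_mem_graded ha1 hm) hb1
      rw [e1] at h1; rw [e2] at h2
      exact add_mem h1 h2
    have hv : a0 * m * b1 + a1 * m * b0 ∈ 𝒜 (k + 1) := by
      have h1 := SetLike.mul_mem_graded (SetLike.mul_mem_graded ha0 hm) hb1
      have h2 := SetLike.mul_mem_graded (SetLike.mul_mem_graded ha1 hm) hb0
      rw [e3] at h1; rw [e4] at h2
      exact add_mem h1 h2
    exact aux_even_odd_zero 𝒜 hu hv h0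
  -- the relations for arbitrary middle terms
  have hR1all : ∀ m : A, a0 * m * b0 + a1 * m * b1 = 0 := by
    intro m
    conv_lhs => rw [aux_sum_decompose 𝒜 m]
    have p0 := (hR 0 _ (SetLike.coe_mem (DirectSum.decompose 𝒜 m 0))).1
    have p1 := (hR 1 _ (SetLike.coe_mem (DirectSum.decompose 𝒜 m 1))).1
    have expand : a0 * ((DirectSum.decompose 𝒜 m 0 : A) + (DirectSum.decompose 𝒜 m 1 : A)) * b0
        + a1 * ((DirectSum.decompose 𝒜 m 0 : A) + (DirectSum.decompose 𝒜 m 1 : A)) * b1 =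
        (a0 * (DirectSum.decompose 𝒜 m 0 : A) * b0 + a1 * (DirectSum.decompose 𝒜 m 0 : A) * b1)
        + (a0 * (DirectSum.decompose 𝒜 m 1 : A) * b0
          + a1 * (DirectSum.decompose 𝒜 m 1 : A) * b1) := by noncomm_ring
    rw [expand, p0, p1, add_zero]
  have hR2all : ∀ m : A, a0 * m * b1 + a1 * m * b0 = 0 := by
    intro m
    conv_lhs => rw [aux_sum_decompose 𝒜 m]
    have p0 := (hR 0 _ (SetLike.coe_mem (DirectSum.decompose 𝒜 m 0))).2
    have p1 := (hR 1 _ (SetLike.coe_mem (DirectSum.decompose 𝒜 m 1))).2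
    have expand : a0 * ((DirectSum.decompose 𝒜 m 0 : A) + (DirectSum.decompose 𝒜 m 1 : A)) * b1
        + a1 * ((DirectSum.decompose 𝒜 m 0 : A) + (DirectSum.decompose 𝒜 m 1 : A)) * b0 =
        (a0 * (DirectSum.decompose 𝒜 m 0 : A) * b1 + a1 * (DirectSum.decompose 𝒜 m 0 : A) * b0)
        + (a0 * (DirectSum.decompose 𝒜 m 1 : A) * b1
          + a1 * (DirectSum.decompose 𝒜 m 1 : A) * b0) := by noncomm_ring
    rw [expand, p0, p1, add_zero]
  -- nondegeneracy of the even components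
  have ha0ne : a0 ≠ 0 := by
    intro h0a
    have ha1ne : a1 ≠ 0 := by intro h1a; exact ha (by rw [haeq, h0a, h1a, add_zero])
    have k1 : ∀ m : A, a1 * m * b1 = 0 := by
      intro m; have h' := hR1all m; rw [h0a] at h'; simpa using h'
    have k2 : ∀ m : A, a1 * m * b0 = 0 := by
      intro m; have h' := hR2all m; rw [h0a] at h'; simpa using h'
    have hb1z := (aux_hom_prime 𝒜 hprime ha1 hb1 k1).resolve_left ha1ne
    have hb0z := (aux_hom_prime 𝒜 hprime ha1 hb0 k2).resolve_left ha1ne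
    exact hb (by rw [hbeq, hb0z, hb1z, add_zero])
  have hb0ne : b0 ≠ 0 := by
    intro h0b
    have hb1ne : b1 ≠ 0 := by intro h1b; exact hb (by rw [hbeq, h0b, h1b, add_zero])
    have k1 : ∀ m : A, a1 * m * b1 = 0 := by
      intro m; have h' := hR1all m; rw [h0b] at h'; simpa using h'
    have k2 : ∀ m : A, a0 * m * b1 = 0 := by
      intro m; have h' := hR2all m; rw [h0b] at h'; simpa using h'
    have ha1z := (aux_hom_prime 𝒜 hprime ha1 hb1 k1).resolve_right hb1ne
    have ha0z := (aux_hom_prime 𝒜 hprime ha0 hb1 k2).resolve_right hb1ne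
    exact ha0ne ha0z
  -- construct a nonzero odd element `c` with `c A₀ c = 0`
  obtain ⟨x, hx⟩ : ∃ x : A, e * x * f ≠ 0 := by
    by_contra hno
    push_neg at hno
    rcases aux_hom_prime 𝒜 hprime he0 hf0 hno with h' | h'
    · exact he h'
    · exact hf h'
  obtain ⟨c, hc1, hcne, hc0c⟩ : ∃ c : A, c ∈ 𝒜 1 ∧ c ≠ 0 ∧ ∀ W ∈ 𝒜 0, c * W * c = 0 := by
    refine ⟨e * (DirectSum.decompose 𝒜 x 1 : A) * f, ?_, ?_, ?_⟩
    · have h1 := SetLike.mul_mem_graded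
        (SetLike.mul_mem_graded he0 (SetLike.coe_mem (DirectSum.decompose 𝒜 x 1))) hf0
      rwa [show (0 : ZMod 2) + 1 + 0 = 1 by decide] at h1
    · intro h0
      apply hx
      conv_lhs => rw [aux_sum_decompose 𝒜 x]
      have expand : e * ((DirectSum.decompose 𝒜 x 0 : A) + (DirectSum.decompose 𝒜 x 1 : A)) * f
          = e * (DirectSum.decompose 𝒜 x 0 : A) * f
            + e * (DirectSum.decompose 𝒜 x 1 : A) * f := by noncomm_ring
      rw [expand, hef _ (SetLike.coe_mem _), h0, zero_add]
    · intro W hW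
      have m1 := SetLike.mul_mem_graded (SetLike.mul_mem_graded hf0 hW) he0
      have m2 := SetLike.mul_mem_graded (SetLike.mul_mem_graded
        (SetLike.coe_mem (DirectSum.decompose 𝒜 x 1)) m1)
        (SetLike.coe_mem (DirectSum.decompose 𝒜 x 1))
      rw [show (1 : ZMod 2) + (0 + 0 + 0) + 1 = 0 by decide] at m2
      have hrw : e * (DirectSum.decompose 𝒜 x 1 : A) * f * W
            * (e * (DirectSum.decompose 𝒜 x 1 : A) * f)
          = e * ((DirectSum.decompose 𝒜 x 1 : A) * (f * W * e)
            * (DirectSum.decompose 𝒜 x 1 : A)) * f := by simp only [mul_assoc]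
      rw [hrw, hef _ m2]
  -- the key identity
  have key : ∀ (x' y' : ZMod 2) (X Y Z W : A), X ∈ 𝒜 x' → Y ∈ 𝒜 y' →
      c * X * a0 * Y * c * Z * b0 * W * c = 0 := by
    intro x' y' X Y Z W hX hY
    rcases zmod2_cases_s2 (x' + y') with hxy | hxy
    · have h1 : X * a0 * Y ∈ 𝒜 0 := by
        have h' := SetLike.mul_mem_graded (SetLike.mul_mem_graded hX ha0) hY
        rwa [show x' + 0 + y' = 0 by rw [add_zero]; exact hxy] at h'
      have h2 := hc0c _ h1
      calc c * X * a0 * Y * c * Z * b0 * W * c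
          = (c * (X * a0 * Y) * c) * (Z * (b0 * (W * c))) := by simp only [mul_assoc]
        _ = 0 := by rw [h2, zero_mul]
    · have hm := SetLike.mul_mem_graded (SetLike.mul_mem_graded hY hc1)
        (SetLike.coe_mem (DirectSum.decompose 𝒜 Z 0))
      -- we do not need homogeneity of Z, W; redo with the plain relation
      have hR1' : a0 * (Y * c * Z) * b0 = -(a1 * (Y * c * Z) * b1) :=
        eq_neg_of_add_eq_zero_left (hR1all (Y * c * Z))
      have h1 : X * a1 * Y ∈ 𝒜 0 := by
        have h' := SetLike.mul_mem_graded (SetLike.mul_mem_graded hX ha1) hY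
        have hdeg : x' + 1 + y' = 0 := by
          have hcomm : x' + 1 + y' = x' + y' + 1 := by ring
          rw [hcomm, hxy]; decide
        rwa [hdeg] at h'
      have h2 := hc0c _ h1
      calc c * X * a0 * Y * c * Z * b0 * W * c
          = c * X * (a0 * (Y * c * Z) * b0) * (W * c) := by simp only [mul_assoc]
        _ = c * X * (-(a1 * (Y * c * Z) * b1)) * (W * c) := by rw [hR1']
        _ = -((c * (X * a1 * Y) * c) * (Z * (b1 * (W * c)))) := by
            simp only [mul_assoc, mul_neg, neg_mul]
        _ = 0 := by rw [h2, zero_mul, neg_zero]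
  -- extension from homogeneous middle terms to arbitrary ones
  have ext : ∀ g h : A, (∀ (k : ZMod 2) (m : A), m ∈ 𝒜 k → g * m * h = 0) →
      ∀ m : A, g * m * h = 0 := by
    intro g h hgh m
    conv_lhs => rw [aux_sum_decompose 𝒜 m]
    have expand : g * ((DirectSum.decompose 𝒜 m 0 : A) + (DirectSum.decompose 𝒜 m 1 : A)) * h
        = g * (DirectSum.decompose 𝒜 m 0 : A) * h
          + g * (DirectSum.decompose 𝒜 m 1 : A) * h := by noncomm_ring
    rw [expand, hgh 0 _ (SetLike.coe_mem _), hgh 1 _ (SetLike.coe_mem _), add_zero]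
  -- peel off the factors one by one using homogeneous primeness
  have step1 : ∀ (y' z' w' : ZMod 2) (Y Z W : A), Y ∈ 𝒜 y' → Z ∈ 𝒜 z' → W ∈ 𝒜 w' →
      a0 * Y * c * Z * b0 * W * c = 0 := by
    intro y' z' w' Y Z W hY hZ hW
    have hd : a0 * Y * c * Z * b0 * W * c ∈ 𝒜 (0 + y' + 1 + z' + 0 + w' + 1) :=
      SetLike.mul_mem_graded (SetLike.mul_mem_graded (SetLike.mul_mem_graded
        (SetLike.mul_mem_graded (SetLike.mul_mem_graded
          (SetLike.mul_mem_graded ha0 hY) hc1) hZ) hb0) hW) hc1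
    have hall : ∀ X : A, c * X * (a0 * Y * c * Z * b0 * W * c) = 0 := by
      apply ext
      intro k m hm
      have e' := key k y' m Y Z W hm hY
      simp only [mul_assoc] at e' ⊢
      exact e'
    exact (aux_hom_prime 𝒜 hprime hc1 hd hall).resolve_left hcne
  have step2 : ∀ (z' w' : ZMod 2) (Z W : A), Z ∈ 𝒜 z' → W ∈ 𝒜 w' →
      c * Z * b0 * W * c = 0 := by
    intro z' w' Z W hZ hW
    have hd : c * Z * b0 * W * c ∈ 𝒜 (1 + z' + 0 + w' + 1) :=
      SetLike.mul_mem_graded (SetLike.mul_mem_graded (SetLike.mul_mem_graded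
        (SetLike.mul_mem_graded hc1 hZ) hb0) hW) hc1
    have hall : ∀ Y : A, a0 * Y * (c * Z * b0 * W * c) = 0 := by
      apply ext
      intro k m hm
      have e' := step1 k z' w' m Z W hm hZ hW
      simp only [mul_assoc] at e' ⊢
      exact e'
    exact (aux_hom_prime 𝒜 hprime ha0 hd hall).resolve_left ha0ne
  have step3 : ∀ (w' : ZMod 2) (W : A), W ∈ 𝒜 w' → b0 * W * c = 0 := by
    intro w' W hW
    have hd : b0 * W * c ∈ 𝒜 (0 + w' + 1) :=
      SetLike.mul_mem_graded (SetLike.mul_mem_graded hb0 hW) hc1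
    have hall : ∀ Z : A, c * Z * (b0 * W * c) = 0 := by
      apply ext
      intro k m hm
      have e' := step2 k w' m W hm hW
      simp only [mul_assoc] at e' ⊢
      exact e'
    exact (aux_hom_prime 𝒜 hprime hc1 hd hall).resolve_left hcne
  have hall4 : ∀ W : A, b0 * W * c = 0 := ext b0 c (fun k m hm => step3 k m hm)
  rcases aux_hom_prime 𝒜 hprime hb0 hc1 hall4 with h' | h'
  · exact hb0ne h'
  · exact hcne h'
end

section
/- Let A = A₀ ⊕ A₁ be a prime superalgebra over a commutative unital ring φ with 1/2 ∈ φ, and let I be a nonzero two-sided ideal of the ring A₀. If x₁ ∈ A₁ satisfies x₁ y = y x₁ for every y ∈ I, then x₁ belongs to the center Z(A) of A. -/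
/-!
Primeness is used in the form `a * A * b = 0 → a = 0 ∨ b = 0` for homogeneous `b`.
For even `a`, the odd element `[x₁, a]` is annihilated on both sides by `I`; this forces
`I * A * [x₁, a] = 0`, hence `[x₁, a] = 0`. Once `x₁` centralizes `A₀`, a similar computation
gives `[x₁, u] * A * x₁ = 0` for odd `u`.
-/

open DirectSum

variable {φ A : Type*}

section GradedRing

variable {ι R S : Type*} [Ring R] [SetLike S R] [AddCommMonoid ι]
  {𝒜 : ι → S} [SetLike.GradedMonoid 𝒜]

theorem SetLike.mul_mem_graded_of_add_eq {a b : R} {i j k : ι} (ha : a ∈ 𝒜 i) (hb : b ∈ 𝒜 j)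
    (h : i + j = k) : a * b ∈ 𝒜 k :=
  h ▸ SetLike.mul_mem_graded ha hb

theorem SetLike.mul_sub_mul_mem_graded [AddSubgroupClass S R] {a b : R} {i j k : ι}
    (ha : a ∈ 𝒜 i) (hb : b ∈ 𝒜 j) (h : i + j = k) : a * b - b * a ∈ 𝒜 k :=
  sub_mem (mul_mem_graded_of_add_eq ha hb h) (mul_mem_graded_of_add_eq hb ha (add_comm i j ▸ h))

end GradedRing

namespace IsTwoSidedIdealIn

variable [Ring A] {B I : Set A} {c : A}

theorem mul_mem_left (hI : IsTwoSidedIdealIn B I) {b x : A} (hb : b ∈ B) (hx : x ∈ I) :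
    b * x ∈ I :=
  (hI.2.2.2.2 b hb x hx).1

theorem mul_mem_right (hI : IsTwoSidedIdealIn B I) {b x : A} (hb : b ∈ B) (hx : x ∈ I) :
    x * b ∈ I :=
  (hI.2.2.2.2 b hb x hx).2

theorem exists_ne_zero (hI : IsTwoSidedIdealIn B I) (hne : I ≠ {0}) : ∃ y ∈ I, y ≠ 0 := by
  by_contra! h
  exact hne (Set.eq_singleton_iff_unique_mem.mpr ⟨hI.2.1, h⟩)

theorem mul_commutator_eq_zero (hI : IsTwoSidedIdealIn B I)
    (hcomm : ∀ y ∈ I, c * y = y * c) {y a : A} (hy : y ∈ I) (ha : a ∈ B) :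
    y * (c * a - a * c) = 0 :=
  calc y * (c * a - a * c) = c * y * a - y * a * c := by rw [hcomm y hy]; noncomm_ring
    _ = 0 := by rw [mul_assoc, hcomm _ (hI.mul_mem_right ha hy), sub_self]

theorem commutator_mul_eq_zero (hI : IsTwoSidedIdealIn B I)
    (hcomm : ∀ y ∈ I, c * y = y * c) {y a : A} (hy : y ∈ I) (ha : a ∈ B) :
    (c * a - a * c) * y = 0 :=
  calc (c * a - a * c) * y = c * (a * y) - a * (c * y) := by noncomm_ring
    _ = 0 := by rw [hcomm y hy, hcomm _ (hI.mul_mem_left ha hy)]; noncomm_ring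

end IsTwoSidedIdealIn

open SetLike

section Superalgebra

variable [CommRing φ] [Ring A] [Algebra φ A] (𝒜 : ZMod 2 → Submodule φ A) [GradedAlgebra 𝒜]

theorem coe_decompose_zero_add_coe_decompose_one (x : A) :
    (decompose 𝒜 x 0 : A) + decompose 𝒜 x 1 = x := by
  conv_rhs => rw [← (decompose 𝒜).symm_apply_apply x, ← sum_univ_of (decompose 𝒜 x)]
  simp only [decompose_symm_sum, decompose_symm_of]
  exact (Fin.sum_univ_two (fun i : ZMod 2 => (decompose 𝒜 x i : A))).symm

variable {𝒜}

theorem mul_mul_eq_zero_of_even_of_odd {a b : A} (h₀ : ∀ r ∈ 𝒜 0, a * r * b = 0)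
    (h₁ : ∀ r ∈ 𝒜 1, a * r * b = 0) (r : A) : a * r * b = 0 := by
  rw [← coe_decompose_zero_add_coe_decompose_one 𝒜 r, mul_add, add_mul,
    h₀ _ (coe_mem _), h₁ _ (coe_mem _), add_zero]

namespace SuperIdeal

def leftAnnihilatorOf {b : A} {j : ZMod 2} (hb : b ∈ 𝒜 j) : SuperIdeal 𝒜 where
  carrier :=
    { carrier := {x | ∀ r, x * r * b = 0}
      add_mem' := fun hx hy r => by rw [add_mul, add_mul, hx r, hy r, add_zero]
      zero_mem' := fun r => by rw [zero_mul, zero_mul]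
      smul_mem' := fun c x hx r => by rw [smul_mul_assoc, smul_mul_assoc, hx r, smul_zero] }
  mul_mem_left a x hx r := by rw [mul_assoc a, mul_assoc a, hx, mul_zero]
  mul_mem_right a x hx r := by rw [mul_assoc x, hx]
  graded' k x hx := by
    have hcomponent {i : ZMod 2} (r : A) (hr : r ∈ 𝒜 i) : (decompose 𝒜 x k : A) * r * b = 0 := by
      rw [mul_assoc, ← coe_decompose_mul_add_of_right_mem 𝒜 (mul_mem_graded hr hb),
        ← mul_assoc, hx r, decompose_zero, DirectSum.zero_apply, ZeroMemClass.coe_zero]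
    exact mul_mul_eq_zero_of_even_of_odd hcomponent hcomponent

def rightAnnihilator (I : SuperIdeal 𝒜) : SuperIdeal 𝒜 where
  carrier :=
    { carrier := {y | ∀ x ∈ I.carrier, x * y = 0}
      add_mem' := fun hy hy' x hx => by rw [mul_add, hy x hx, hy' x hx, add_zero]
      zero_mem' := fun x _ => mul_zero x
      smul_mem' := fun c y hy x hx => by rw [mul_smul_comm, hy x hx, smul_zero] }
  mul_mem_left a y hy x hx := by rw [← mul_assoc, hy _ (I.mul_mem_right a x hx)]
  mul_mem_right a y hy x hx := by rw [← mul_assoc, hy x hx, zero_mul]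
  graded' k y hy x hx := by
    have hcomponent (i : ZMod 2) : (decompose 𝒜 x i : A) * decompose 𝒜 y k = 0 := by
      rw [← coe_decompose_mul_add_of_left_mem 𝒜 (coe_mem _), hy _ (I.graded' i x hx),
        decompose_zero, DirectSum.zero_apply, ZeroMemClass.coe_zero]
    rw [← coe_decompose_zero_add_coe_decompose_one 𝒜 x, add_mul, hcomponent, hcomponent, add_zero]

end SuperIdeal

/-- `a` lies in the graded ideal `L = {x | x * A * b = 0}` and `b` in its right annihilator,
and these two ideals multiply to zero. -/
theorem SuperPrime.eq_zero_or_eq_zero_of_mul_mul (hprime : SuperPrime 𝒜) {a b : A} {j : ZMod 2}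
    (hb : b ∈ 𝒜 j) (h₀ : ∀ r ∈ 𝒜 0, a * r * b = 0) (h₁ : ∀ r ∈ 𝒜 1, a * r * b = 0) :
    a = 0 ∨ b = 0 := by
  set L := SuperIdeal.leftAnnihilatorOf hb
  have haL : a ∈ L.carrier := mul_mul_eq_zero_of_even_of_odd h₀ h₁
  have hbR : b ∈ L.rightAnnihilator.carrier := fun x hx => by simpa using hx 1
  refine (hprime L L.rightAnnihilator fun x hx y hy => hy x hx).imp (fun hL => ?_) (fun hR => ?_)
  · simpa [hL] using haL
  · simpa [hR] using hbR

/-- `[c, u] * A * c = 0` for odd `u`: `[c, u] * r` is `[c, u * r]` for even `r` and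
`-u * [c, r]` for odd `r`, and `[c, w] * c = 0` for every odd `w`. -/
theorem mem_center_of_mem_odd_of_commute_even (hprime : SuperPrime 𝒜) {c : A} (hc : c ∈ 𝒜 1)
    (heven : ∀ a ∈ 𝒜 0, c * a = a * c) : c ∈ Subring.center A := by
  have hcommutator_mul : ∀ w ∈ 𝒜 1, (c * w - w * c) * c = 0 := fun w hw => by
    calc (c * w - w * c) * c = c * (w * c) - w * c * c := by noncomm_ring
      _ = 0 := by rw [heven _ (mul_mem_graded_of_add_eq hw hc (by decide)), sub_self]
  have hodd : ∀ u ∈ 𝒜 1, c * u = u * c := by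
    intro u hu
    by_cases hc0 : c = 0
    · simp [hc0]
    refine sub_eq_zero.mp ((hprime.eq_zero_or_eq_zero_of_mul_mul hc ?_ ?_).resolve_right hc0)
    · intro r hr
      calc (c * u - u * c) * r * c
          = (c * (u * r) - u * r * c) * c + u * ((r * c - c * r) * c) := by noncomm_ring
        _ = 0 := by
          rw [hcommutator_mul _ (mul_mem_graded_of_add_eq hu hr (by decide)), heven r hr, sub_self,
            zero_mul, mul_zero, add_zero]
    · intro r hr
      calc (c * u - u * c) * r * c
          = (c * (u * r) - u * r * c) * c - u * ((c * r - r * c) * c) := by noncomm_ring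
        _ = 0 := by
          rw [heven _ (mul_mem_graded_of_add_eq hu hr (by decide)), sub_self, zero_mul,
            hcommutator_mul r hr, mul_zero, sub_zero]
  rw [Subring.mem_center_iff]
  intro g
  rw [← coe_decompose_zero_add_coe_decompose_one 𝒜 g, add_mul, mul_add, heven _ (coe_mem _),
    hodd _ (coe_mem _)]

end Superalgebra

section CentralizerOfEvenIdeal

variable [CommRing φ] [Ring A] [Algebra φ A] {𝒜 : ZMod 2 → Submodule φ A} [GradedAlgebra 𝒜]
  {I : Set A} {c : A}

/-- `z = y * x * [c, a]` lies in `I`, and `z * A * z = 0`: for even `r` because `[c, a]`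
annihilates `r * y ∈ I`, for odd `r` because `I` annihilates `[c, a]` and `z * r * y * x ∈ I`. -/
theorem mul_mul_commutator_eq_zero (hprime : SuperPrime 𝒜)
    (hI : IsTwoSidedIdealIn (𝒜 0 : Set A) I) (hc : c ∈ 𝒜 1) (hcomm : ∀ y ∈ I, c * y = y * c)
    {y x a : A} (hy : y ∈ I) (hx : x ∈ 𝒜 1) (ha : a ∈ 𝒜 0) : y * x * (c * a - a * c) = 0 := by
  set d := c * a - a * c
  have hd : d ∈ 𝒜 1 := mul_sub_mul_mem_graded hc ha (by decide)
  have hz : y * x * d ∈ I := by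
    rw [mul_assoc]
    exact hI.mul_mem_right (mul_mem_graded_of_add_eq hx hd (by decide)) hy
  refine (hprime.eq_zero_or_eq_zero_of_mul_mul (hI.1 hz) ?_ ?_).elim id id
  · intro r hr
    calc y * x * d * r * (y * x * d) = y * x * (d * (r * y)) * (x * d) := by noncomm_ring
      _ = 0 := by
        rw [hI.commutator_mul_eq_zero hcomm (hI.mul_mem_left hr hy) ha, mul_zero, zero_mul]
  · intro r hr
    have hryx : r * y * x ∈ 𝒜 0 :=
      mul_mem_graded_of_add_eq (mul_mem_graded_of_add_eq hr (hI.1 hy) rfl) hx (by decide)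
    calc y * x * d * r * (y * x * d) = y * x * d * (r * y * x) * d := by noncomm_ring
      _ = 0 := hI.mul_commutator_eq_zero hcomm (hI.mul_mem_right hryx hz) ha

theorem commute_of_mem_even (hprime : SuperPrime 𝒜) (hI : IsTwoSidedIdealIn (𝒜 0 : Set A) I)
    (hIne : I ≠ {0}) (hc : c ∈ 𝒜 1) (hcomm : ∀ y ∈ I, c * y = y * c) {a : A} (ha : a ∈ 𝒜 0) :
    c * a = a * c := by
  obtain ⟨y, hy, hy0⟩ := hI.exists_ne_zero hIne
  refine sub_eq_zero.mp ((hprime.eq_zero_or_eq_zero_of_mul_mul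
    (mul_sub_mul_mem_graded hc ha (by decide : (1 : ZMod 2) + 0 = 1)) ?_ ?_).resolve_left hy0)
  · exact fun r hr => hI.mul_commutator_eq_zero hcomm (hI.mul_mem_right hr hy) ha
  · exact fun r hr => mul_mul_commutator_eq_zero hprime hI hc hcomm hy hr ha

end CentralizerOfEvenIdeal

theorem odd_centralizing_even_ideal_central_general
    {φ A : Type*} [CommRing φ] [Ring A] [Algebra φ A]
    (𝒜 : ZMod 2 → Submodule φ A) [GradedAlgebra 𝒜]
    (hprime : SuperPrime 𝒜)
    (I : Set A) (hI : IsTwoSidedIdealIn (𝒜 0 : Set A) I) (hIne : I ≠ {0})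
    (x₁ : A) (hx₁ : x₁ ∈ 𝒜 1)
    (hcomm : ∀ y ∈ I, x₁ * y = y * x₁) :
    x₁ ∈ Subring.center A :=
  mem_center_of_mem_odd_of_commute_even hprime hx₁ fun _ ha =>
    commute_of_mem_even hprime hI hIne hx₁ hcomm ha

/-- Let `A = A₀ ⊕ A₁` be a prime superalgebra over a commutative ring `φ` with `½ ∈ φ`, and
let `I` be a nonzero two-sided ideal of the ring `A₀`. If `x₁ ∈ A₁` centralizes `I`,
then `x₁ ∈ Z(A)`. -/
theorem odd_centralizing_even_ideal_central
    {φ A : Type*} [CommRing φ] [Invertible (2 : φ)] [Ring A] [Algebra φ A]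
    (𝒜 : ZMod 2 → Submodule φ A) [GradedAlgebra 𝒜]
    (hprime : SuperPrime 𝒜)
    (I : Set A) (hI : IsTwoSidedIdealIn (𝒜 0 : Set A) I) (hIne : I ≠ {0})
    (x₁ : A) (hx₁ : x₁ ∈ 𝒜 1)
    (hcomm : ∀ y ∈ I, x₁ * y = y * x₁) :
    x₁ ∈ Subring.center A :=
  odd_centralizing_even_ideal_central_general 𝒜 hprime I hI hIne x₁ hx₁ hcomm
end

section
/- Let A be a semiprime superalgebra over a commutative unital ring φ with 1/2 ∈ φ, and let L be a Lie ideal of A, i.e., a graded φ-submodule with [L,A] ⊆ L (superbracket). Then either [L,L] = 0, or L is dense in A. -/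
open DirectSum

variable {φ A : Type*}

/-!
Let `V` be the subalgebra generated by the homogeneous elements of `L`. The super-Leibniz rule
makes `V` a Lie ideal again, hence `[V,V]·A ⊆ V` and `A·[V,V] ⊆ V`, so the graded ideal `J`
generated by the products `[V,V]·[V,V]` lies in `V`. If `J ≠ 0`, then `L` is dense. If `J = 0`,
the super-Jacobi identity gives `[V,V]·A·[V,V] = 0`, so the ideal generated by `[V,V]` squares to
zero and vanishes by semiprimeness; in particular `[L,L] = 0`.
-/

open SetLike (IsHomogeneousElem)
open scoped Pointwise

theorem zmod_two_cases (i : ZMod 2) : i = 0 ∨ i = 1 := by revert i; decide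

section SignIdentities
variable [Ring A]

theorem mul_eq_sbr_add (i j : ZMod 2) (x a : A) : x * a = sbr i j x a + ssign i j • (a * x) :=
  (sub_add_cancel _ _).symm

theorem sbr_mul_left (i j k : ZMod 2) (x y a : A) :
    sbr (i + j) k (x * y) a = x * sbr j k y a + ssign j k • (sbr i k x a * y) := by
  rcases zmod_two_cases i with rfl | rfl <;> rcases zmod_two_cases j with rfl | rfl <;>
    rcases zmod_two_cases k with rfl | rfl <;>
    simp [sbr, ssign, show (1 + 1 : ZMod 2) = 0 by decide] <;> noncomm_ring

theorem sbr_mul_right (i j k : ZMod 2) (v w a : A) :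
    sbr i (j + k) v (w * a) = sbr i j v w * a + ssign i j • (w * sbr i k v a) := by
  rcases zmod_two_cases i with rfl | rfl <;> rcases zmod_two_cases j with rfl | rfl <;>
    rcases zmod_two_cases k with rfl | rfl <;>
    simp [sbr, ssign, show (1 + 1 : ZMod 2) = 0 by decide] <;> noncomm_ring

theorem sbr_swap (i k : ZMod 2) (v a : A) : sbr k i a v = -(ssign i k • sbr i k v a) := by
  rcases zmod_two_cases i with rfl | rfl <;> rcases zmod_two_cases k with rfl | rfl <;>
    simp [sbr, ssign]

theorem sbr_sbr (i j k : ZMod 2) (v w c : A) :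
    sbr (i + j) k (sbr i j v w) c
      = sbr i (j + k) v (sbr j k w c) - ssign i j • sbr j (i + k) w (sbr i k v c) := by
  rcases zmod_two_cases i with rfl | rfl <;> rcases zmod_two_cases j with rfl | rfl <;>
    rcases zmod_two_cases k with rfl | rfl <;>
    simp [sbr, ssign, show (1 + 1 : ZMod 2) = 0 by decide] <;> noncomm_ring

theorem sbr_add_left (i j : ZMod 2) (x y a : A) :
    sbr i j (x + y) a = sbr i j x a + sbr i j y a := by
  simp only [sbr, add_mul, mul_add, smul_add]
  abel

theorem sbr_smul_left [CommRing φ] [Algebra φ A] (i j : ZMod 2) (c : φ) (x a : A) :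
    sbr i j (c • x) a = c • sbr i j x a := by
  simp only [sbr, smul_mul_assoc, mul_smul_comm, smul_sub, smul_comm c]

end SignIdentities

section Decomposition
variable {ι M : Type*} [DecidableEq ι] [Semiring φ] [AddCommMonoid M] [Module φ M]
  (ℳ : ι → Submodule φ M) [Decomposition ℳ]

theorem decompose_mem_span_inter {G : Set M} (hG : ∀ g ∈ G, IsHomogeneousElem ℳ g)
    (i : ι) {x : M} (hx : x ∈ Submodule.span φ G) :
    (decompose ℳ x i : M) ∈ Submodule.span φ (G ∩ ℳ i) := by
  induction hx using Submodule.span_induction with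
  | mem g hg =>
    obtain ⟨d, hd⟩ := hG g hg
    by_cases h : d = i
    · subst h
      rw [decompose_of_mem_same ℳ hd]
      exact Submodule.subset_span ⟨hg, hd⟩
    · rw [decompose_of_mem_ne ℳ hd h]
      exact zero_mem _
  | zero => simp
  | add x y _ _ hx hy => simpa using add_mem hx hy
  | smul c x _ hx =>
    rw [decompose_smul, DirectSum.smul_apply, Submodule.coe_smul]
    exact Submodule.smul_mem _ c hx

theorem mem_span_inter_of_mem {G : Set M} (hG : ∀ g ∈ G, IsHomogeneousElem ℳ g)
    {i : ι} {x : M} (hx : x ∈ Submodule.span φ G) (hxi : x ∈ ℳ i) :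
    x ∈ Submodule.span φ (G ∩ ℳ i) :=
  decompose_of_mem_same ℳ hxi ▸ decompose_mem_span_inter ℳ hG i hx

end Decomposition

section Graded
variable [CommRing φ] [Ring A] [Algebra φ A] (𝒜 : ZMod 2 → Submodule φ A) [GradedAlgebra 𝒜]

theorem sbr_mem_graded {i j : ZMod 2} {x y : A} (hx : x ∈ 𝒜 i) (hy : y ∈ 𝒜 j) :
    sbr i j x y ∈ 𝒜 (i + j) :=
  sub_mem (SetLike.mul_mem_graded hx hy)
    (zsmul_mem (add_comm j i ▸ SetLike.mul_mem_graded hy hx) _)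

theorem sbr_eq_of_mem_of_mem {i i' : ZMod 2} {x : A} (hi : x ∈ 𝒜 i) (hi' : x ∈ 𝒜 i')
    (k : ZMod 2) (a : A) : sbr i k x a = sbr i' k x a := by
  rcases eq_or_ne x 0 with rfl | hx
  · simp [sbr]
  · rw [DirectSum.degree_eq_of_mem_mem 𝒜 hi hi' hx]

def homogeneousSandwiches (S : Set A) : Set A :=
  {x | ∃ a s b, IsHomogeneousElem 𝒜 a ∧ s ∈ S ∧ IsHomogeneousElem 𝒜 b ∧ x = a * s * b}

variable {𝒜} in
theorem isHomogeneousElem_of_mem_homogeneousSandwiches {S : Set A}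
    (hS : ∀ s ∈ S, IsHomogeneousElem 𝒜 s) {x : A} (hx : x ∈ homogeneousSandwiches 𝒜 S) :
    IsHomogeneousElem 𝒜 x := by
  obtain ⟨a, s, b, ha, hs, hb, rfl⟩ := hx
  exact (ha.mul (hS s hs)).mul hb

theorem mul_mem_span_homogeneousSandwiches {S : Set A} (c : A) {x : A}
    (hx : x ∈ Submodule.span φ (homogeneousSandwiches 𝒜 S)) :
    c * x ∈ Submodule.span φ (homogeneousSandwiches 𝒜 S) := by
  induction c using DirectSum.Decomposition.inductionOn 𝒜 with
  | zero => simp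
  | homogeneous c =>
    induction hx using Submodule.span_induction with
    | mem x hx =>
      obtain ⟨a, s, b, ha, hs, hb, rfl⟩ := hx
      exact Submodule.subset_span
        ⟨c * a, s, b, (SetLike.isHomogeneousElem_coe c).mul ha, hs, hb, by simp only [mul_assoc]⟩
    | zero => simp
    | add x y _ _ hx hy => simpa only [mul_add] using add_mem hx hy
    | smul r x _ hx => simpa only [mul_smul_comm] using Submodule.smul_mem _ r hx
  | add c c' hc hc' => simpa only [add_mul] using add_mem hc hc'

theorem mem_span_homogeneousSandwiches_mul {S : Set A} (c : A) {x : A}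
    (hx : x ∈ Submodule.span φ (homogeneousSandwiches 𝒜 S)) :
    x * c ∈ Submodule.span φ (homogeneousSandwiches 𝒜 S) := by
  induction c using DirectSum.Decomposition.inductionOn 𝒜 with
  | zero => simp
  | homogeneous c =>
    induction hx using Submodule.span_induction with
    | mem x hx =>
      obtain ⟨a, s, b, ha, hs, hb, rfl⟩ := hx
      exact Submodule.subset_span
        ⟨a, s, b * c, ha, hs, hb.mul (SetLike.isHomogeneousElem_coe c), by simp only [mul_assoc]⟩
    | zero => simp
    | add x y _ _ hx hy => simpa only [add_mul] using add_mem hx hy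
    | smul r x _ hx => simpa only [smul_mul_assoc] using Submodule.smul_mem _ r hx
  | add c c' hc hc' => simpa only [mul_add] using add_mem hc hc'

def SuperIdeal.ofHomogeneous (S : Set A) (hS : ∀ s ∈ S, IsHomogeneousElem 𝒜 s) :
    SuperIdeal 𝒜 where
  carrier := Submodule.span φ (homogeneousSandwiches 𝒜 S)
  mul_mem_left c _ := mul_mem_span_homogeneousSandwiches 𝒜 c
  mul_mem_right c _ := mem_span_homogeneousSandwiches_mul 𝒜 c
  graded' i _ hx := Submodule.span_mono Set.inter_subset_left <|
    decompose_mem_span_inter 𝒜 (fun _ ↦ isHomogeneousElem_of_mem_homogeneousSandwiches hS) i hx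

namespace SuperIdeal
variable {𝒜} {S : Set A} (hS : ∀ s ∈ S, IsHomogeneousElem 𝒜 s)

theorem subset_ofHomogeneous_carrier : S ⊆ (ofHomogeneous 𝒜 S hS).carrier := fun s hs ↦
  Submodule.subset_span
    ⟨1, s, 1, SetLike.isHomogeneousElem_one 𝒜, hs, SetLike.isHomogeneousElem_one 𝒜, by simp⟩

theorem ofHomogeneous_carrier_eq_bot_iff :
    (ofHomogeneous 𝒜 S hS).carrier = ⊥ ↔ ∀ s ∈ S, s = 0 := by
  refine ⟨fun h s hs ↦ ?_, fun h ↦ Submodule.span_eq_bot.mpr ?_⟩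
  · simpa [h] using subset_ofHomogeneous_carrier hS hs
  · rintro _ ⟨a, s, b, -, hs, -, rfl⟩
    simp [h s hs]

theorem ofHomogeneous_mul_eq_zero
    (h : ∀ s ∈ S, ∀ t ∈ S, ∀ c : A, IsHomogeneousElem 𝒜 c → s * c * t = 0) :
    ∀ x ∈ (ofHomogeneous 𝒜 S hS).carrier, ∀ y ∈ (ofHomogeneous 𝒜 S hS).carrier, x * y = 0 := by
  intro x hx y hy
  have hxy := Submodule.mul_mem_mul hx hy
  rw [ofHomogeneous, Submodule.span_mul_span,
    Submodule.span_eq_bot.mpr, Submodule.mem_bot] at hxy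
  · exact hxy
  rintro _ ⟨_, ⟨a, s, b, -, hs, hb, rfl⟩, _, ⟨a', t, b', ha', ht, -, rfl⟩, rfl⟩
  calc a * s * b * (a' * t * b') = a * (s * (b * a') * t) * b' := by simp only [mul_assoc]
    _ = 0 := by rw [h s hs t ht _ (hb.mul ha'), mul_zero, zero_mul]

end SuperIdeal

end Graded

section LieIdeal
variable [CommRing φ] [Ring A] [Algebra φ A] (𝒜 : ZMod 2 → Submodule φ A)

def IsSuperLieIdeal (M : Set A) : Prop :=
  ∀ (i j : ZMod 2), ∀ x ∈ M, x ∈ 𝒜 i → ∀ a ∈ 𝒜 j, sbr i j x a ∈ M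

def superBrackets (M : Set A) : Set A :=
  {z | ∃ (i j : ZMod 2) (v w : A), v ∈ M ∧ v ∈ 𝒜 i ∧ w ∈ M ∧ w ∈ 𝒜 j ∧ z = sbr i j v w}

def homogeneousAdjoin (M : Set A) : NonUnitalSubalgebra φ A :=
  NonUnitalAlgebra.adjoin φ {x | x ∈ M ∧ IsHomogeneousElem 𝒜 x}

variable [GradedAlgebra 𝒜] {𝒜}

theorem isHomogeneousElem_of_mem_superBrackets {M : Set A} {z : A}
    (hz : z ∈ superBrackets 𝒜 M) : IsHomogeneousElem 𝒜 z := by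
  obtain ⟨i, j, v, w, -, hv, -, hw, rfl⟩ := hz
  exact ⟨_, sbr_mem_graded 𝒜 hv hw⟩

theorem isHomogeneousElem_of_mem_superBrackets_mul {M : Set A} {z : A}
    (hz : z ∈ superBrackets 𝒜 M * superBrackets 𝒜 M) : IsHomogeneousElem 𝒜 z := by
  obtain ⟨x, hx, y, hy, rfl⟩ := hz
  exact (isHomogeneousElem_of_mem_superBrackets hx).mul (isHomogeneousElem_of_mem_superBrackets hy)

theorem isHomogeneousElem_of_mem_closure {M : Set A} {x : A}
    (hx : x ∈ Subsemigroup.closure {x | x ∈ M ∧ IsHomogeneousElem 𝒜 x}) :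
    IsHomogeneousElem 𝒜 x :=
  Subsemigroup.closure_le (S := (SetLike.homogeneousSubmonoid 𝒜).toSubsemigroup).mpr
    (fun _ hx ↦ hx.2) hx

namespace IsSuperLieIdeal
variable {M : Set A} (hM : IsSuperLieIdeal 𝒜 M)
include hM

theorem sbr_mem_homogeneousAdjoin_of_mem_closure {x : A}
    (hx : x ∈ Subsemigroup.closure {x | x ∈ M ∧ IsHomogeneousElem 𝒜 x}) {d k : ZMod 2}
    (hxd : x ∈ 𝒜 d) {a : A} (ha : a ∈ 𝒜 k) : sbr d k x a ∈ homogeneousAdjoin 𝒜 M := by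
  induction hx using Subsemigroup.closure_induction generalizing d with
  | mem x hx =>
    obtain ⟨hxM, i, hxi⟩ := hx
    rw [sbr_eq_of_mem_of_mem 𝒜 hxd hxi]
    exact NonUnitalAlgebra.subset_adjoin φ ⟨hM i k x hxM hxi a ha, _, sbr_mem_graded 𝒜 hxi ha⟩
  | mul x y hx hy ihx ihy =>
    obtain ⟨i, hxi⟩ := isHomogeneousElem_of_mem_closure hx
    obtain ⟨j, hyj⟩ := isHomogeneousElem_of_mem_closure hy
    have mem_adjoin : ∀ z ∈ Subsemigroup.closure {x | x ∈ M ∧ IsHomogeneousElem 𝒜 x},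
        z ∈ homogeneousAdjoin 𝒜 M := fun z hz ↦
      (NonUnitalAlgebra.adjoin_eq_span (R := φ) _).ge (Submodule.subset_span hz)
    rw [sbr_eq_of_mem_of_mem 𝒜 hxd (SetLike.mul_mem_graded hxi hyj), sbr_mul_left]
    exact add_mem (mul_mem (mem_adjoin x hx) (ihy hyj))
      (zsmul_mem (mul_mem (ihx hxi) (mem_adjoin y hy)) _)

theorem homogeneousAdjoin : IsSuperLieIdeal 𝒜 (homogeneousAdjoin 𝒜 M) := by
  intro i k v hv hvi a ha
  rw [SetLike.mem_coe] at hv ⊢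
  have hv' := mem_span_inter_of_mem 𝒜 (fun _ ↦ isHomogeneousElem_of_mem_closure)
    ((NonUnitalAlgebra.adjoin_eq_span (R := φ) _).le hv) hvi
  clear hv hvi
  induction hv' using Submodule.span_induction with
  | mem x hx => exact hM.sbr_mem_homogeneousAdjoin_of_mem_closure hx.1 hx.2 ha
  | zero => simp [sbr]
  | add x y _ _ hx hy => simpa only [sbr_add_left] using add_mem hx hy
  | smul c x _ hx => simpa only [sbr_smul_left] using SMulMemClass.smul_mem c hx

theorem superBrackets_mul_mul_eq_zero
    (h : ∀ s ∈ superBrackets 𝒜 M, ∀ t ∈ superBrackets 𝒜 M, s * t = 0) {s t c : A}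
    (hs : s ∈ superBrackets 𝒜 M) (ht : t ∈ superBrackets 𝒜 M) (hc : IsHomogeneousElem 𝒜 c) :
    s * c * t = 0 := by
  obtain ⟨i, j, v, w, hv, hvi, hw, hwj, rfl⟩ := hs
  obtain ⟨m, hcm⟩ := hc
  have bracket_mem {p q : ZMod 2} {x y : A} (hx : x ∈ M) (hxp : x ∈ 𝒜 p) (hy : y ∈ M)
      (hyq : y ∈ 𝒜 q) : sbr p q x y ∈ superBrackets 𝒜 M := ⟨_, _, _, _, hx, hxp, hy, hyq, rfl⟩
  -- `[v,w] c = [[v,w],c] ± c [v,w]`, and super-Jacobi writes `[[v,w],c]` as two brackets of `M`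
  rw [mul_eq_sbr_add (i + j) m (sbr i j v w) c, add_mul, smul_mul_assoc, mul_assoc c,
    h _ (bracket_mem hv hvi hw hwj) t ht, mul_zero, smul_zero, add_zero, sbr_sbr, sub_mul,
    smul_mul_assoc,
    h _ (bracket_mem hv hvi (hM j m w hw hwj c hcm) (sbr_mem_graded 𝒜 hwj hcm)) t ht,
    h _ (bracket_mem hw hwj (hM i m v hv hvi c hcm) (sbr_mem_graded 𝒜 hvi hcm)) t ht,
    smul_zero, sub_zero]

end IsSuperLieIdeal

namespace IsSuperLieIdeal
variable {V : NonUnitalSubalgebra φ A} (hV : IsSuperLieIdeal 𝒜 V)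
include hV

theorem sbr_mul_mem {i j k : ZMod 2} {v w a : A} (hv : v ∈ V) (hvi : v ∈ 𝒜 i) (hw : w ∈ V)
    (hwj : w ∈ 𝒜 j) (ha : a ∈ 𝒜 k) : sbr i j v w * a ∈ V := by
  rw [show sbr i j v w * a = sbr i (j + k) v (w * a) - ssign i j • (w * sbr i k v a) by
    rw [sbr_mul_right]; abel]
  exact sub_mem (hV i (j + k) v hv hvi _ (SetLike.mul_mem_graded hwj ha))
    (zsmul_mem (mul_mem hw (hV i k v hv hvi a ha)) _)

theorem mul_sbr_mem {i j k : ZMod 2} {v w a : A} (hv : v ∈ V) (hvi : v ∈ 𝒜 i) (hw : w ∈ V)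
    (hwj : w ∈ 𝒜 j) (ha : a ∈ 𝒜 k) : a * sbr i j v w ∈ V := by
  have hvw : sbr i j v w ∈ V := sub_mem (mul_mem hv hw) (zsmul_mem (mul_mem hw hv) _)
  rw [mul_eq_sbr_add k (i + j), sbr_swap]
  exact add_mem (neg_mem (zsmul_mem (hV _ _ _ hvw (sbr_mem_graded 𝒜 hvi hwj) a ha) _))
    (zsmul_mem (hV.sbr_mul_mem hv hvi hw hwj ha) _)

theorem homogeneousSandwiches_superBrackets_mul_subset :
    homogeneousSandwiches 𝒜 (superBrackets 𝒜 V * superBrackets 𝒜 V) ⊆ V := by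
  rintro _ ⟨a, _, b, ⟨k, ha⟩, ⟨_, ⟨i, j, v, w, hv, hvi, hw, hwj, rfl⟩, _,
    ⟨i', j', v', w', hv', hvi', hw', hwj', rfl⟩, rfl⟩, ⟨l, hb⟩, rfl⟩
  rw [show a * (sbr i j v w * sbr i' j' v' w') * b = a * sbr i j v w * (sbr i' j' v' w' * b) by
    simp only [mul_assoc]]
  exact mul_mem (hV.mul_sbr_mem hv hvi hw hwj ha) (hV.sbr_mul_mem hv' hvi' hw' hwj' hb)

end IsSuperLieIdeal
end LieIdeal

theorem lie_ideal_abelian_or_dense_general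
    {φ A : Type*} [CommRing φ] [Ring A] [Algebra φ A]
    (𝒜 : ZMod 2 → Submodule φ A) [GradedAlgebra 𝒜]
    (hsemi : SuperSemiprime 𝒜)
    (L : Submodule φ A)
    (hLie : ∀ (i j : ZMod 2), ∀ x ∈ L, x ∈ 𝒜 i → ∀ a ∈ 𝒜 j, sbr i j x a ∈ L) :
    (∀ (i j : ZMod 2), ∀ x ∈ L, x ∈ 𝒜 i → ∀ y ∈ L, y ∈ 𝒜 j → sbr i j x y = 0) ∨
    IsDenseIn 𝒜 (L : Set A) := by
  set V := homogeneousAdjoin 𝒜 (L : Set A)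
  have hV : IsSuperLieIdeal 𝒜 V := IsSuperLieIdeal.homogeneousAdjoin hLie
  set B := superBrackets 𝒜 V
  set J := SuperIdeal.ofHomogeneous 𝒜 (B * B) fun _ ↦ isHomogeneousElem_of_mem_superBrackets_mul
  by_cases hJ : J.carrier = ⊥
  · left
    have hBB : ∀ s ∈ B, ∀ t ∈ B, s * t = 0 := fun s hs t ht ↦
      (SuperIdeal.ofHomogeneous_carrier_eq_bot_iff _).mp hJ _ (Set.mul_mem_mul hs ht)
    have hI := hsemi _ (SuperIdeal.ofHomogeneous_mul_eq_zero
      (fun _ ↦ isHomogeneousElem_of_mem_superBrackets) fun s hs t ht _ hc ↦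
        hV.superBrackets_mul_mul_eq_zero hBB hs ht hc)
    intro i j x hx hxi y hy hyj
    have mem_V {z : A} {d : ZMod 2} (hz : z ∈ L) (hzd : z ∈ 𝒜 d) : z ∈ V :=
      NonUnitalAlgebra.subset_adjoin φ ⟨hz, d, hzd⟩
    exact (SuperIdeal.ofHomogeneous_carrier_eq_bot_iff _).mp hI _
      ⟨i, j, x, y, mem_V hx hxi, hxi, mem_V hy hyj, hyj, rfl⟩
  · right
    refine ⟨J, hJ, fun x hx ↦ ?_⟩
    have hxV : x ∈ V :=
      Submodule.span_le.mpr hV.homogeneousSandwiches_superBrackets_mul_subset hx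
    exact NonUnitalAlgebra.adjoin_mono (fun _ hz ↦ hz.1) hxV

/-- **(Gómez-Ambrosi–Laliena–Shestakov, Corollary 2.)** Let `A` be a semiprime superalgebra
over a commutative ring `φ` with `½ ∈ φ` and let `L` be a Lie ideal of `A` (a graded
`φ`-submodule with `[L,A] ⊆ L`). Then either `[L,L] = 0` or `L` is dense in `A`. -/
theorem lie_ideal_abelian_or_dense
    {φ A : Type*} [CommRing φ] [Invertible (2 : φ)] [Ring A] [Algebra φ A]
    (𝒜 : ZMod 2 → Submodule φ A) [GradedAlgebra 𝒜]
    (hsemi : SuperSemiprime 𝒜)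
    (L : Submodule φ A)
    (hLgr : ∀ (i : ZMod 2), ∀ x ∈ L, ((DirectSum.decompose 𝒜 x) i : A) ∈ L)
    (hLie : ∀ (i j : ZMod 2), ∀ x ∈ L, x ∈ 𝒜 i → ∀ a ∈ 𝒜 j, sbr i j x a ∈ L) :
    (∀ (i j : ZMod 2), ∀ x ∈ L, x ∈ 𝒜 i → ∀ y ∈ L, y ∈ 𝒜 j → sbr i j x y = 0) ∨
    IsDenseIn 𝒜 (L : Set A) :=
  lie_ideal_abelian_or_dense_general 𝒜 hsemi L hLie
end

section
/- Let A be a nontrivial semiprime superalgebra with superinvolution * over a commutative unital ring φ with 1/2 ∈ φ, and let U be a Lie ideal of K such that [u∘v, w] = 0 for all homogeneous u, v, w ∈ U. Then u∘v ∈ Z for every u, v ∈ U₀, where U₀ = U ∩ A₀. -/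
open DirectSum

variable {φ A : Type*}

/-!
For even `w ∈ U` let `D = ad (w²)`. Taking `u = v = w` in `[u∘v, z] = 0` shows that `w²` commutes
with `U`. A skew `k` has `D k = w[w,k] + [w,k]w` with `[w,k] ∈ U`, and a symmetric `y` has
`D y = [w, wy + yw] ∈ U`; either way `D² = 0`, so `D² = 0` on all of `A` since `½ ∈ φ`. The Leibniz
rule then gives `D x · y · D x = 0`, and semiprimeness forces `D = 0`: `w²` is central. Finally
`u∘v = (u+v)² − u² − v²`.
-/

@[simp]
theorem ssign_zero_left (j : ZMod 2) : ssign 0 j = 1 := by simp [ssign]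

@[simp]
theorem ssign_zero_right (i : ZMod 2) : ssign i 0 = 1 := by simp [ssign]

theorem sbr_zero_left [CommRing φ] [Ring A] [Algebra φ A] (j : ZMod 2) (x y : A) :
    sbr 0 j x y = ⁅x, y⁆ := by
  simp [sbr, Ring.lie_def]

theorem scirc_zero_zero [CommRing φ] [Ring A] [Algebra φ A] (x y : A) :
    scirc 0 0 x y = x * y + y * x := by
  simp [scirc]

theorem eq_zero_of_add_self_eq_zero (R : Type*) {M : Type*} [Semiring R] [Invertible (2 : R)]
    [AddCommMonoid M] [Module R M] {c : M} (h : c + c = 0) : c = 0 := by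
  rw [← invOf_two_smul_add_invOf_two_smul R c, ← smul_add, h, smul_zero]

theorem Commute.mul_add_mul_of_mul_self {R : Type*} [Ring R] {u v x : R}
    (hu : Commute (u * u) x) (hv : Commute (v * v) x) (huv : Commute ((u + v) * (u + v)) x) :
    Commute (u * v + v * u) x := by
  have hcirc : u * v + v * u = (u + v) * (u + v) - u * u - v * v := by noncomm_ring
  rw [hcirc]
  exact (huv.sub_left hu).sub_left hv

section

attribute [local instance 100] LieRing.ofAssociativeRing

section Commutator

variable [Ring A] [Invertible (2 : A)]

theorem lie_mul_lie_eq_zero_of_lie_lie_eq_zero {a : A} (h : ∀ x : A, ⁅a, ⁅a, x⁆⁆ = 0) (x y : A) :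
    ⁅a, x⁆ * ⁅a, y⁆ = 0 := by
  have leibniz : ⁅a, ⁅a, x * y⁆⁆ =
      ⁅a, ⁅a, x⁆⁆ * y + (⁅a, x⁆ * ⁅a, y⁆ + ⁅a, x⁆ * ⁅a, y⁆) + x * ⁅a, ⁅a, y⁆⁆ := by
    simp only [Ring.lie_def]; noncomm_ring
  rw [h, h, h, zero_mul, mul_zero, zero_add, add_zero] at leibniz
  exact eq_zero_of_add_self_eq_zero A leibniz.symm

theorem lie_mul_mul_lie_eq_zero_of_lie_lie_eq_zero {a : A} (h : ∀ x : A, ⁅a, ⁅a, x⁆⁆ = 0)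
    (x y : A) : ⁅a, x⁆ * y * ⁅a, x⁆ = 0 := by
  have leibniz : ⁅a, x⁆ * y * ⁅a, x⁆ = ⁅a, x⁆ * ⁅a, y * x⁆ - ⁅a, x⁆ * ⁅a, y⁆ * x := by
    simp only [Ring.lie_def]; noncomm_ring
  rw [leibniz, lie_mul_lie_eq_zero_of_lie_lie_eq_zero h, lie_mul_lie_eq_zero_of_lie_lie_eq_zero h,
    zero_mul, sub_zero]

end Commutator

section Graded

variable [CommRing φ] [Ring A] [Algebra φ A] {ι : Type*} [DecidableEq ι] [AddMonoid ι]
  {𝒜 : ι → Submodule φ A} [GradedAlgebra 𝒜]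

theorem GradedAlgebra.proj_mem_of_mem_graded {M : Submodule φ A} {n : ι} {x : A} (hxn : x ∈ 𝒜 n)
    (hxM : x ∈ M) (i : ι) : GradedAlgebra.proj 𝒜 i x ∈ M := by
  rw [GradedAlgebra.proj_apply, decompose_of_mem 𝒜 hxn, coe_of_apply]
  split_ifs
  exacts [hxM, M.zero_mem]

theorem mul_mem_graded_of_mem_zero_left {a x : A} {n : ι} (ha : a ∈ 𝒜 0) (hx : x ∈ 𝒜 n) :
    a * x ∈ 𝒜 n := by
  simpa using SetLike.mul_mem_graded ha hx

theorem mul_mem_graded_of_mem_zero_right {a x : A} {n : ι} (ha : a ∈ 𝒜 0) (hx : x ∈ 𝒜 n) :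
    x * a ∈ 𝒜 n := by
  simpa using SetLike.mul_mem_graded hx ha

theorem lie_mem_graded_of_mem_zero {a x : A} {n : ι} (ha : a ∈ 𝒜 0) (hx : x ∈ 𝒜 n) :
    ⁅a, x⁆ ∈ 𝒜 n :=
  sub_mem (mul_mem_graded_of_mem_zero_left ha hx) (mul_mem_graded_of_mem_zero_right ha hx)

theorem proj_mul_mul_mem_span {j : ι} {c : A} (hc : c ∈ 𝒜 j) (p q : A) (i : ι) :
    GradedAlgebra.proj 𝒜 i (p * c * q) ∈
      Submodule.span φ (Set.range fun pq : A × A => pq.1 * c * pq.2) := by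
  classical
  rw [← sum_support_decompose 𝒜 p, ← sum_support_decompose 𝒜 q, Finset.sum_mul, Finset.sum_mul,
    map_sum]
  refine Submodule.sum_mem _ fun m _ => ?_
  rw [Finset.mul_sum, map_sum]
  refine Submodule.sum_mem _ fun l _ => ?_
  exact GradedAlgebra.proj_mem_of_mem_graded
    (SetLike.mul_mem_graded (SetLike.mul_mem_graded (decompose 𝒜 p m).2 hc) (decompose 𝒜 q l).2)
    (Submodule.subset_span (Set.mem_range_self ((decompose 𝒜 p m : A), (decompose 𝒜 q l : A)))) i

end Graded

section Semiprime

variable [CommRing φ] [Ring A] [Algebra φ A] {𝒜 : ZMod 2 → Submodule φ A} [GradedAlgebra 𝒜]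

def SuperIdeal.spanSingleton {j : ZMod 2} {c : A} (hc : c ∈ 𝒜 j) : SuperIdeal 𝒜 where
  carrier := Submodule.span φ (Set.range fun pq : A × A => pq.1 * c * pq.2)
  mul_mem_left a _ hx := by
    refine (Submodule.span_le (p := (Submodule.span φ _).comap (LinearMap.mulLeft φ a))).2 ?_ hx
    rintro _ ⟨⟨p, q⟩, rfl⟩
    exact Submodule.subset_span ⟨(a * p, q), by simp [mul_assoc]⟩
  mul_mem_right a _ hx := by
    refine (Submodule.span_le (p := (Submodule.span φ _).comap (LinearMap.mulRight φ a))).2 ?_ hx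
    rintro _ ⟨⟨p, q⟩, rfl⟩
    exact Submodule.subset_span ⟨(p, q * a), by simp [mul_assoc]⟩
  graded' i _ hx := by
    refine (Submodule.span_le (p := (Submodule.span φ _).comap (GradedAlgebra.proj 𝒜 i))).2 ?_ hx
    rintro _ ⟨⟨p, q⟩, rfl⟩
    exact proj_mul_mul_mem_span hc p q i

theorem SuperSemiprime.eq_zero_of_mul_mul_eq_zero (hsemi : SuperSemiprime 𝒜) {j : ZMod 2} {c : A}
    (hc : c ∈ 𝒜 j) (h : ∀ y, c * y * c = 0) : c = 0 := by
  have hsq : ∀ x ∈ (SuperIdeal.spanSingleton hc).carrier,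
      ∀ y ∈ (SuperIdeal.spanSingleton hc).carrier, x * y = 0 := by
    intro x hx y hy
    have hxy := Submodule.mul_mem_mul hx hy
    rw [SuperIdeal.spanSingleton, Submodule.span_mul_span] at hxy
    refine (Submodule.mem_bot φ).1 (Submodule.span_le.2 ?_ hxy)
    rintro _ ⟨_, ⟨⟨p, q⟩, rfl⟩, _, ⟨⟨p', q'⟩, rfl⟩, rfl⟩
    calc p * c * q * (p' * c * q') = p * (c * (q * p') * c) * q' := by noncomm_ring
      _ = 0 := by rw [h, mul_zero, zero_mul]
  have hc_mem : c ∈ (SuperIdeal.spanSingleton hc).carrier :=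
    Submodule.subset_span ⟨(1, 1), by simp⟩
  simpa [hsemi _ hsq] using hc_mem

theorem SuperSemiprime.lie_eq_zero_of_lie_lie_eq_zero [Invertible (2 : A)]
    (hsemi : SuperSemiprime 𝒜) {a : A} (ha : a ∈ 𝒜 0) (h : ∀ x : A, ⁅a, ⁅a, x⁆⁆ = 0) (x : A) :
    ⁅a, x⁆ = 0 := by
  induction x using DirectSum.Decomposition.inductionOn 𝒜 with
  | zero => exact lie_zero a
  | homogeneous x =>
    exact hsemi.eq_zero_of_mul_mul_eq_zero (lie_mem_graded_of_mem_zero ha x.2)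
      (lie_mul_mul_lie_eq_zero_of_lie_lie_eq_zero h x)
  | add x y hx hy => rw [lie_add, hx, hy, add_zero]

end Semiprime

namespace LieIdealOfSkew

variable [CommRing φ] [Ring A] [Algebra φ A] {𝒜 : ZMod 2 → Submodule φ A} [GradedAlgebra 𝒜]
  {σ : Superinvolution 𝒜} {U : LieIdealOfSkew 𝒜 σ} {w : A}

theorem lie_mul_self_eq_zero_of_mem [Invertible (2 : A)]
    (hU : ∀ (i j k : ZMod 2) (u v w : A), u ∈ U.carrier → u ∈ 𝒜 i → v ∈ U.carrier → v ∈ 𝒜 j →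
      w ∈ U.carrier → w ∈ 𝒜 k → sbr (i + j) k (scirc i j u v) w = 0)
    (hwU : w ∈ U.carrier) (hw0 : w ∈ 𝒜 0) {n : ZMod 2} {z : A} (hzU : z ∈ U.carrier)
    (hzn : z ∈ 𝒜 n) : ⁅w * w, z⁆ = 0 := by
  have h := hU 0 0 n w w z hwU hw0 hwU hw0 hzU hzn
  rw [add_zero, sbr_zero_left (φ := φ), scirc_zero_zero (φ := φ), add_lie] at h
  exact eq_zero_of_add_self_eq_zero A h

theorem lie_lie_mul_self_eq_zero_of_skew (hwU : w ∈ U.carrier) (hw0 : w ∈ 𝒜 0)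
    (hcomm : ∀ (n : ZMod 2) (z : A), z ∈ U.carrier → z ∈ 𝒜 n → ⁅w * w, z⁆ = 0)
    {n : ZMod 2} {k : A} (hk : k ∈ 𝒜 n) (hks : σ.toFun k = -k) :
    ⁅w * w, ⁅w * w, k⁆⁆ = 0 := by
  have hwk : ⁅w * w, ⁅w, k⁆⁆ = 0 := by
    refine hcomm n _ ?_ (lie_mem_graded_of_mem_zero hw0 hk)
    rw [← sbr_zero_left (φ := φ)]
    exact U.bracket_mem 0 n w k hwU hw0 hk hks
  have leibniz : ⁅w * w, ⁅w * w, k⁆⁆ = w * ⁅w * w, ⁅w, k⁆⁆ + ⁅w * w, ⁅w, k⁆⁆ * w := by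
    simp only [Ring.lie_def]; noncomm_ring
  rw [leibniz, hwk, mul_zero, zero_mul, add_zero]

theorem lie_lie_mul_self_eq_zero_of_symm (hwU : w ∈ U.carrier) (hw0 : w ∈ 𝒜 0)
    (hcomm : ∀ (n : ZMod 2) (z : A), z ∈ U.carrier → z ∈ 𝒜 n → ⁅w * w, z⁆ = 0)
    {n : ZMod 2} {y : A} (hy : y ∈ 𝒜 n) (hys : σ.toFun y = y) :
    ⁅w * w, ⁅w * w, y⁆⁆ = 0 := by
  have hskew : σ.toFun (w * y + y * w) = -(w * y + y * w) := by
    rw [map_add, σ.mul_rev 0 n w hw0 y hy, σ.mul_rev n 0 y hy w hw0, U.skew w hwU, hys]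
    simp only [ssign_zero_left, ssign_zero_right, one_smul, mul_neg, neg_mul]
    abel
  have hwy : ⁅w * w, y⁆ = ⁅w, w * y + y * w⁆ := by
    simp only [Ring.lie_def]; noncomm_ring
  have hmem : ⁅w * w, y⁆ ∈ U.carrier := by
    rw [hwy, ← sbr_zero_left (φ := φ) n]
    exact U.bracket_mem 0 n w _ hwU hw0 (add_mem (mul_mem_graded_of_mem_zero_left hw0 hy)
      (mul_mem_graded_of_mem_zero_right hw0 hy)) hskew
  exact hcomm n _ hmem (lie_mem_graded_of_mem_zero (mul_mem_graded_of_mem_zero_left hw0 hw0) hy)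

theorem lie_lie_mul_self_eq_zero [Invertible (2 : A)] (hwU : w ∈ U.carrier) (hw0 : w ∈ 𝒜 0)
    (hcomm : ∀ (n : ZMod 2) (z : A), z ∈ U.carrier → z ∈ 𝒜 n → ⁅w * w, z⁆ = 0) (x : A) :
    ⁅w * w, ⁅w * w, x⁆⁆ = 0 := by
  induction x using DirectSum.Decomposition.inductionOn 𝒜 with
  | zero => rw [lie_zero, lie_zero]
  | @homogeneous n x =>
    obtain ⟨x, hx⟩ := x
    have hσx := σ.grading n x hx
    have hsymm := lie_lie_mul_self_eq_zero_of_symm hwU hw0 hcomm (add_mem hx hσx)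
      (by rw [map_add, σ.invol, add_comm])
    have hskew := lie_lie_mul_self_eq_zero_of_skew hwU hw0 hcomm (sub_mem hx hσx)
      (by rw [map_sub, σ.invol, neg_sub])
    have hsplit : ⁅w * w, ⁅w * w, x⁆⁆ + ⁅w * w, ⁅w * w, x⁆⁆ =
        ⁅w * w, ⁅w * w, x + σ.toFun x⁆⁆ + ⁅w * w, ⁅w * w, x - σ.toFun x⁆⁆ := by
      simp only [lie_add, lie_sub]; abel
    rw [hsymm, hskew, add_zero] at hsplit
    exact eq_zero_of_add_self_eq_zero A hsplit
  | add x y hx hy => rw [lie_add, lie_add, hx, hy, add_zero]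

theorem commute_mul_self [Invertible (2 : A)] (hsemi : SuperSemiprime 𝒜)
    (hU : ∀ (i j k : ZMod 2) (u v w : A), u ∈ U.carrier → u ∈ 𝒜 i → v ∈ U.carrier → v ∈ 𝒜 j →
      w ∈ U.carrier → w ∈ 𝒜 k → sbr (i + j) k (scirc i j u v) w = 0)
    (hwU : w ∈ U.carrier) (hw0 : w ∈ 𝒜 0) (x : A) : Commute (w * w) x :=
  commute_iff_lie_eq.2 <| hsemi.lie_eq_zero_of_lie_lie_eq_zero
    (mul_mem_graded_of_mem_zero_left hw0 hw0)
    (lie_lie_mul_self_eq_zero hwU hw0 fun _ _ hzU hzn =>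
      lie_mul_self_eq_zero_of_mem hU hwU hw0 hzU hzn) x

end LieIdealOfSkew

end

theorem circ_even_central_of_circ_bracket_zero_general
    {φ A : Type*} [CommRing φ] [Invertible (2 : φ)] [Ring A] [Algebra φ A]
    (𝒜 : ZMod 2 → Submodule φ A) [GradedAlgebra 𝒜]
    (hsemi : SuperSemiprime 𝒜)
    (σ : Superinvolution 𝒜) (U : LieIdealOfSkew 𝒜 σ)
    (hU : ∀ (i j k : ZMod 2) (u v w : A), u ∈ U.carrier → u ∈ 𝒜 i → v ∈ U.carrier → v ∈ 𝒜 j →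
      w ∈ U.carrier → w ∈ 𝒜 k → sbr (i + j) k (scirc i j u v) w = 0) :
    ∀ u v : A, u ∈ U.carrier → u ∈ 𝒜 0 → v ∈ U.carrier → v ∈ 𝒜 0 →
      scirc 0 0 u v ∈ evenCenter 𝒜 := by
  intro u v huU hu0 hvU hv0
  let : Invertible (2 : A) := (Invertible.map (algebraMap φ A) 2).copy 2 (map_ofNat _ 2).symm
  have hsq : ∀ w, w ∈ U.carrier → w ∈ 𝒜 0 → ∀ x : A, Commute (w * w) x :=
    fun w hwU hw0 => U.commute_mul_self hsemi hU hwU hw0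
  rw [scirc_zero_zero (φ := φ)]
  refine ⟨add_mem (mul_mem_graded_of_mem_zero_left hu0 hv0)
    (mul_mem_graded_of_mem_zero_left hv0 hu0), fun x => ?_⟩
  exact (Commute.mul_add_mul_of_mul_self (hsq u huU hu0 x) (hsq v hvU hv0 x)
    (hsq _ (add_mem huU hvU) (add_mem hu0 hv0) x)).eq

/-- **(Lemma 2.2 (i).)** Let `A` be a nontrivial semiprime superalgebra with superinvolution
over a commutative ring `φ` with `½ ∈ φ`, and let `U` be a Lie ideal of `K` with
`[U∘U, U] = 0`. Then `u∘v ∈ Z` for every `u, v ∈ U₀`. -/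
theorem circ_even_central_of_circ_bracket_zero
    {φ A : Type*} [CommRing φ] [Invertible (2 : φ)] [Ring A] [Algebra φ A]
    (𝒜 : ZMod 2 → Submodule φ A) [GradedAlgebra 𝒜]
    (hsemi : SuperSemiprime 𝒜) (hnontriv : 𝒜 1 ≠ ⊥)
    (σ : Superinvolution 𝒜) (U : LieIdealOfSkew 𝒜 σ)
    (hU : ∀ (i j k : ZMod 2) (u v w : A), u ∈ U.carrier → u ∈ 𝒜 i → v ∈ U.carrier → v ∈ 𝒜 j →
      w ∈ U.carrier → w ∈ 𝒜 k → sbr (i + j) k (scirc i j u v) w = 0) :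
    ∀ u v : A, u ∈ U.carrier → u ∈ 𝒜 0 → v ∈ U.carrier → v ∈ 𝒜 0 →
      scirc 0 0 u v ∈ evenCenter 𝒜 :=
  circ_even_central_of_circ_bracket_zero_general 𝒜 hsemi σ U hU
end
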